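/- arXiv:1707.06486 — 8 statements merged into one kernel-verified Lean document; each statement's English description precedes it below -/
import Mathlib

section
/- Suppose that the product of transfer matrices at zero satisfies ∏_{i=0}^{N−1} B̂^i(0) = γ·Id for some real number γ. Let (ã_k : k ≥ 0) be an arbitrary sequence of positive real numbers and define a_{Nk+i} = α_i·ã_k and b_{Nk+i} = β_i·ã_k for 0 ≤ i ≤ N−1 and k ≥ 0. Let (p_n : n ≥ 0) be the orthonormal polynomials associated with (a_n) and (b_n), i.e. p_0 = 1, p_1(x) = (x − b_0)/a_0, and a_{n−1}·p_{n−1}(x) + b_n·p_n(x) + a_n·p_{n+1}(x) = x·p_n(x) for all n ≥ 1. Then γ² = 1 and for all k ≥ 0 and all 0 ≤ i ≤ N−1 one has p_{Nk+i}(0) = γ^k · w_i(0). -/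
/-!
At `x = 0` the orthonormal polynomials do not see the scaling `ã`: the sequence `n ↦ w_n(0)` already
satisfies the recurrence of `(a, b)` at `0`. Inside a block this is the recurrence of `(α, β)`
multiplied by `ã_k`; across a block boundary the only term mixing two blocks is
`a_{Nk-1} w_{Nk-1}(0)`, and it vanishes. Indeed, since the transfer matrices are `N`-periodic and
their product over a period is `γ • 1`, the vectors `(w_n(0), w_{n+1}(0))` are
`γ`-quasi-periodic and `(w_{N-1}(0), w_N(0)) = γ • (0, 1)`. Hence
`p_n(0) = w_n(0) = γ^k w_i(0)` for `n = Nk + i`. Finally `γ² = 1` because `det B̂^j(0) = α_{j-1}/α_j` telescopes to `1` over a period.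
-/

open Matrix Function

/-- The product `C (n₀ + len - 1) * ⋯ * C n₀` of matrices, with larger indices on the left;
equal to the identity when `len = 0`. -/
def prodDesc (C : ℤ → Matrix (Fin 2) (Fin 2) ℝ) (n₀ : ℤ) : ℕ → Matrix (Fin 2) (Fin 2) ℝ
  | 0 => 1
  | len + 1 => C (n₀ + len) * prodDesc C n₀ len

/-- The transfer matrix `B̂^j(x)` associated with the sequences `α`, `β`. -/
noncomputable def transferMatrix (α β : ℤ → ℝ) (j : ℤ) (x : ℝ) : Matrix (Fin 2) (Fin 2) ℝ :=
  !![0, 1; -(α (j - 1) / α j), (x - β j) / α j]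

section prodDesc

variable (C : ℤ → Matrix (Fin 2) (Fin 2) ℝ)

theorem prodDesc_add (n₀ : ℤ) (l m : ℕ) :
    prodDesc C n₀ (l + m) = prodDesc C (n₀ + l) m * prodDesc C n₀ l := by
  induction m with
  | zero => simp [prodDesc]
  | succ m ih =>
    rw [← add_assoc, prodDesc, prodDesc, ih, Matrix.mul_assoc, Nat.cast_add, add_assoc]

theorem prodDesc_add_period {T : ℤ} (hC : Periodic C T) (n₀ : ℤ) (m : ℕ) :
    prodDesc C (n₀ + T) m = prodDesc C n₀ m := by
  induction m with
  | zero => rfl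
  | succ m ih => rw [prodDesc, prodDesc, ih, add_right_comm, hC]

end prodDesc

section transferMatrix

variable {α β : ℤ → ℝ}

theorem det_transferMatrix (j : ℤ) (x : ℝ) :
    (transferMatrix α β j x).det = α (j - 1) / α j := by
  simp [transferMatrix, det_fin_two_of]

theorem det_prodDesc_transferMatrix (hα : ∀ j, α j ≠ 0) (x : ℝ) (n₀ : ℤ) (len : ℕ) :
    (prodDesc (fun j => transferMatrix α β j x) n₀ len).det = α (n₀ - 1) / α (n₀ + len - 1) := by
  induction len with
  | zero => simp [prodDesc, hα]
  | succ len ih =>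
    rw [prodDesc, det_mul, ih, det_transferMatrix, Nat.cast_succ, ← add_assoc, add_sub_cancel_right]
    field_simp [hα]

theorem transferMatrix_periodic {N : ℤ} (hα : Periodic α N) (hβ : Periodic β N) (x : ℝ) :
    Periodic (fun j => transferMatrix α β j x) N := by
  intro j
  simp only [transferMatrix, hα j, hβ j, add_sub_right_comm, hα (j - 1)]

theorem sq_eq_one_of_prodDesc_transferMatrix_eq_smul (hα : ∀ j, α j ≠ 0) {N : ℕ}
    (hαper : Periodic α N) {x γ : ℝ}
    (hF : prodDesc (fun j => transferMatrix α β j x) 0 N = γ • (1 : Matrix (Fin 2) (Fin 2) ℝ)) :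
    γ ^ 2 = 1 := by
  have hper : α (0 + N - 1) = α (0 - 1) := by
    rw [show (0 : ℤ) + N - 1 = 0 - 1 + N by ring]
    exact hαper _
  have hdet := congrArg det hF
  rw [det_prodDesc_transferMatrix hα, hper, div_self (hα _), det_smul, det_one] at hdet
  simpa using hdet.symm

end transferMatrix

section recurrence

variable {α β : ℤ → ℝ} {x : ℝ} {f : ℕ → ℝ}

theorem transferMatrix_mulVec_of_recurrence {n : ℕ} (hα : α (n + 1) ≠ 0)
    (hrec : α n * f n + β (n + 1) * f (n + 1) + α (n + 1) * f (n + 2) = x * f (n + 1)) :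
    transferMatrix α β (n + 1) x *ᵥ ![f n, f (n + 1)] = ![f (n + 1), f (n + 2)] := by
  ext i
  fin_cases i
  · simp [transferMatrix, mulVec, dotProduct]
  · simp only [mulVec, dotProduct, transferMatrix, add_sub_cancel_right, Fin.mk_one, Fin.isValue,
      of_apply, cons_val', cons_val_fin_one, cons_val_one, Fin.sum_univ_two, cons_val_zero, neg_mul,
      Nat.succ_eq_add_one, Nat.reduceAdd]
    field_simp
    linear_combination -hrec

variable (hα : ∀ j, α j ≠ 0) (hf0 : f 0 = 1) (hf1 : f 1 = (x - β 0) / α 0)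
  (hfrec : ∀ n : ℕ, 1 ≤ n →
    α ((n : ℤ) - 1) * f (n - 1) + β (n : ℤ) * f n + α (n : ℤ) * f (n + 1) = x * f n)
include hα hf0 hf1 hfrec

/-- The state `(0, 1)` plays the role of `(f_{-1}, f_0)`. -/
theorem prodDesc_transferMatrix_mulVec (n : ℕ) :
    prodDesc (fun j => transferMatrix α β j x) 0 (n + 1) *ᵥ ![0, 1] = ![f n, f (n + 1)] := by
  induction n with
  | zero =>
    ext i
    fin_cases i <;> simp [prodDesc, transferMatrix, mulVec, dotProduct, hf0, hf1]
  | succ n ih =>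
    have hrec := hfrec (n + 1) (by omega)
    push_cast at hrec
    rw [add_sub_cancel_right] at hrec
    rw [prodDesc, ← mulVec_mulVec, ih, zero_add]
    exact_mod_cast transferMatrix_mulVec_of_recurrence (hα _) hrec

variable {N : ℕ} (hαper : Periodic α N) (hβper : Periodic β N) {γ : ℝ}
  (hF : prodDesc (fun j => transferMatrix α β j x) 0 N = γ • (1 : Matrix (Fin 2) (Fin 2) ℝ))
include hF

theorem recurrence_pred_period_eq_zero (hN : 0 < N) : f (N - 1) = 0 := by
  have h := prodDesc_transferMatrix_mulVec hα hf0 hf1 hfrec (N - 1)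
  rw [Nat.sub_add_cancel hN, hF, smul_mulVec, one_mulVec] at h
  simpa using (congrFun h 0).symm

include hαper hβper in
theorem recurrence_add_period (n : ℕ) : f (n + N) = γ * f n := by
  have h := prodDesc_transferMatrix_mulVec hα hf0 hf1 hfrec (n + N)
  rw [show n + N + 1 = N + (n + 1) by ring, prodDesc_add,
    prodDesc_add_period _ (transferMatrix_periodic hαper hβper x), hF, Matrix.mul_smul,
    Matrix.mul_one, smul_mulVec, prodDesc_transferMatrix_mulVec hα hf0 hf1 hfrec] at h
  simpa using (congrFun h 0).symm

include hαper hβper in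
theorem recurrence_mul_period_add (k i : ℕ) : f (N * k + i) = γ ^ k * f i := by
  induction k with
  | zero => simp
  | succ k ih =>
    rw [mul_add_one, add_right_comm,
      recurrence_add_period hα hf0 hf1 hfrec hαper hβper hF, ih, pow_succ]
    ring

end recurrence

theorem eq_of_threeTermRecurrence {a b : ℕ → ℝ} {x : ℝ} (ha : ∀ n, a n ≠ 0) {f g : ℕ → ℝ}
    (hf : ∀ n, 1 ≤ n → a (n - 1) * f (n - 1) + b n * f n + a n * f (n + 1) = x * f n)
    (hg : ∀ n, 1 ≤ n → a (n - 1) * g (n - 1) + b n * g n + a n * g (n + 1) = x * g n)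
    (h0 : f 0 = g 0) (h1 : f 1 = g 1) : f = g := by
  have key : ∀ n, f n = g n ∧ f (n + 1) = g (n + 1) := by
    intro n
    induction n with
    | zero => exact ⟨h0, h1⟩
    | succ n ih =>
      refine ⟨ih.2, mul_left_cancel₀ (ha (n + 1)) ?_⟩
      have hfn := hf (n + 1) (by omega)
      have hgn := hg (n + 1) (by omega)
      rw [Nat.add_sub_cancel] at hfn hgn
      linear_combination hfn - hgn + (x - b (n + 1)) * ih.2 - a n * ih.1
  exact funext fun n => (key n).1

theorem eq_mul_of_blockwise {N : ℕ} (hN : 0 < N) {α : ℤ → ℝ} (hα : Periodic α N)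
    {c a : ℕ → ℝ} (ha : ∀ k : ℕ, ∀ i < N, a (N * k + i) = α i * c k) (n : ℕ) :
    a n = α n * c (n / N) := by
  have hn : ((n % N : ℕ) : ℤ) + (n / N : ℕ) * N = n := by exact_mod_cast Nat.mod_add_div' n N
  calc a n = a (N * (n / N) + n % N) := by rw [Nat.div_add_mod]
    _ = α (n % N : ℕ) * c (n / N) := ha _ _ (Nat.mod_lt n hN)
    _ = α n * c (n / N) := by rw [← hα.nat_mul (n / N) ((n % N : ℕ) : ℤ), hn]

/-- `hvanish` makes the only coefficient mixing two blocks, `a (N * k - 1)`, irrelevant. -/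
theorem recurrence_at_zero_of_blockScaled {N : ℕ} (hN : 0 < N) {α β : ℤ → ℝ} {a b c f : ℕ → ℝ}
    (ha : ∀ n, a n = α n * c (n / N)) (hb : ∀ n, b n = β n * c (n / N))
    (hf : ∀ n : ℕ, 1 ≤ n →
      α ((n : ℤ) - 1) * f (n - 1) + β (n : ℤ) * f n + α (n : ℤ) * f (n + 1) = 0 * f n)
    (hvanish : ∀ k, f (N * k + (N - 1)) = 0) (n : ℕ) (hn : 1 ≤ n) :
    a (n - 1) * f (n - 1) + b n * f n + a n * f (n + 1) = 0 * f n := by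
  have hleft : a (n - 1) * f (n - 1) = c (n / N) * (α ((n : ℤ) - 1) * f (n - 1)) := by
    by_cases hdvd : N ∣ n
    · obtain ⟨k, rfl⟩ := hdvd
      obtain ⟨k, rfl⟩ : ∃ k', k = k' + 1 := ⟨k - 1, by rcases k with _ | k <;> simp_all⟩
      rw [show N * (k + 1) - 1 = N * k + (N - 1) by rw [mul_add_one]; omega, hvanish]
      ring
    · have hdiv : (n - 1) / N = n / N := by
        conv_rhs => rw [← Nat.sub_add_cancel hn]
        rw [Nat.succ_div, if_neg (by rwa [Nat.sub_add_cancel hn]), add_zero]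
      rw [ha, hdiv, Nat.cast_sub hn, Nat.cast_one]
      ring
  rw [hleft, hb, ha]
  linear_combination c (n / N) * hf n hn

theorem stmt0 (N : ℕ) (hN : 2 ≤ N)
    (α β : ℤ → ℝ) (hαpos : ∀ j, 0 < α j)
    (hαper : ∀ j, α (j + N) = α j) (hβper : ∀ j, β (j + N) = β j)
    (γ : ℝ)
    (hF : prodDesc (fun j => transferMatrix α β j 0) 0 N = γ • (1 : Matrix (Fin 2) (Fin 2) ℝ))
    (atil : ℕ → ℝ) (hatil : ∀ k, 0 < atil k)
    (a b : ℕ → ℝ)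
    (ha : ∀ k : ℕ, ∀ i < N, a (N * k + i) = α i * atil k)
    (hb : ∀ k : ℕ, ∀ i < N, b (N * k + i) = β i * atil k)
    (p : ℕ → ℝ → ℝ)
    (hp0 : ∀ x, p 0 x = 1) (hp1 : ∀ x, p 1 x = (x - b 0) / a 0)
    (hprec : ∀ n, 1 ≤ n → ∀ x,
      a (n - 1) * p (n - 1) x + b n * p n x + a n * p (n + 1) x = x * p n x)
    (w : ℕ → ℝ → ℝ)
    (hw0 : ∀ x, w 0 x = 1) (hw1 : ∀ x, w 1 x = (x - β 0) / α 0)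
    (hwrec : ∀ n : ℕ, 1 ≤ n → ∀ x,
      α ((n : ℤ) - 1) * w (n - 1) x + β (n : ℤ) * w n x + α (n : ℤ) * w (n + 1) x = x * w n x) :
    γ ^ 2 = 1 ∧ ∀ k : ℕ, ∀ i < N, p (N * k + i) 0 = γ ^ k * w i 0 := by
  have hN0 : 0 < N := by omega
  have hα : ∀ j, α j ≠ 0 := fun j => (hαpos j).ne'
  have hwrec0 := fun n hn => hwrec n hn 0
  have hwper : ∀ k i, w (N * k + i) 0 = γ ^ k * w i 0 :=
    recurrence_mul_period_add (f := (w · 0)) hα (hw0 0) (hw1 0) hwrec0 hαper hβper hF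
  have hwvanish : ∀ k, w (N * k + (N - 1)) 0 = 0 := fun k => by
    rw [hwper, recurrence_pred_period_eq_zero (f := (w · 0)) hα (hw0 0) (hw1 0) hwrec0 hF hN0,
      mul_zero]
  have ha' := eq_mul_of_blockwise hN0 hαper ha
  have hb' := eq_mul_of_blockwise hN0 hβper hb
  have ha0 : ∀ n, a n ≠ 0 := fun n => by
    rw [ha']
    exact mul_ne_zero (hα _) (hatil _).ne'
  have hp1_eq_w1 : p 1 0 = w 1 0 := by
    have hatil0 := (hatil 0).ne'
    simp only [hp1, hw1, ha', hb', Nat.zero_div, Nat.cast_zero]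
    field_simp
    ring
  have hp_eq_w : (p · 0) = (w · 0) :=
    eq_of_threeTermRecurrence ha0 (fun n hn => hprec n hn 0)
      (recurrence_at_zero_of_blockScaled (f := (w · 0)) hN0 ha' hb' hwrec0 hwvanish)
      (by simp [hp0, hw0]) hp1_eq_w1
  refine ⟨sq_eq_one_of_prodDesc_transferMatrix_eq_smul hα hαper hF, fun k i _ => ?_⟩
  rw [congrFun hp_eq_w, hwper]
end

section
/- Suppose that ∏_{i=0}^{N−1} B̂^i(0) = γ·Id for some real number γ. Let (ã_k : k ≥ 0) be an arbitrary sequence of positive real numbers and define a_{Nk+i} = α_i·ã_k and b_{Nk+i} = β_i·ã_k for 0 ≤ i ≤ N−1 and k ≥ 0, and let (p_n : n ≥ 0) be the orthonormal polynomials associated with (a_n) and (b_n). Then the sequence (p_n(0) : n ≥ 0) is 2N-periodic, i.e. p_{n+2N}(0) = p_n(0) for all n ≥ 0, and the sequence (p_n(0)² : n ≥ 0) is not summable, i.e. Σ_{n=0}^∞ p_n(0)² = ∞. -/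
open Matrix in
lemma tmMulVec (α β : ℤ → ℝ) (j : ℤ) (x y : ℝ) :
    transferMatrix α β j 0 *ᵥ ![x, y]
      = ![y, -(α (j-1)/α j) * x + (0 - β j)/α j * y] := by
  funext i
  fin_cases i <;>
    simp [transferMatrix, Matrix.mulVec, dotProduct, Fin.sum_univ_two]

open Matrix in
theorem stmt1 (N : ℕ) (hN : 2 ≤ N)
    (α β : ℤ → ℝ) (hαpos : ∀ j, 0 < α j)
    (hαper : ∀ j, α (j + N) = α j) (hβper : ∀ j, β (j + N) = β j)
    (γ : ℝ)
    (hF : prodDesc (fun j => transferMatrix α β j 0) 0 N = γ • (1 : Matrix (Fin 2) (Fin 2) ℝ))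
    (atil : ℕ → ℝ) (hatil : ∀ k, 0 < atil k)
    (a b : ℕ → ℝ)
    (ha : ∀ k : ℕ, ∀ i < N, a (N * k + i) = α i * atil k)
    (hb : ∀ k : ℕ, ∀ i < N, b (N * k + i) = β i * atil k)
    (p : ℕ → ℝ → ℝ)
    (hp0 : ∀ x, p 0 x = 1) (hp1 : ∀ x, p 1 x = (x - b 0) / a 0)
    (hprec : ∀ n, 1 ≤ n → ∀ x,
      a (n - 1) * p (n - 1) x + b n * p n x + a n * p (n + 1) x = x * p n x) :
    (∀ n : ℕ, p (n + 2 * N) 0 = p n 0) ∧ ¬ Summable (fun n : ℕ => (p n 0) ^ 2) := by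
  have hα : ∀ j, α j ≠ 0 := fun j => (hαpos j).ne'
  have hat : ∀ k, atil k ≠ 0 := fun k => (hatil k).ne'
  set B : ℤ → Matrix (Fin 2) (Fin 2) ℝ := fun j => transferMatrix α β j 0 with hB
  -- γ² = 1
  have hdetB : ∀ j : ℤ, (B j).det = α (j - 1) / α j := by
    intro j; simp [hB, transferMatrix, Matrix.det_fin_two_of]
  have hdetP : ∀ len : ℕ, 1 ≤ len →
      (prodDesc B 0 len).det = α (-1) / α ((len : ℤ) - 1) := by
    intro len hlen
    induction len with
    | zero => omega
    | succ m ih =>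
      have hstep : prodDesc B 0 (m+1) = B m * prodDesc B 0 m := by simp [prodDesc]
      rcases Nat.eq_zero_or_pos m with h0 | h0
      · subst h0
        rw [hstep]
        simp only [prodDesc, Matrix.mul_one, hdetB]
        norm_num
      · have h4 : ((m+1:ℕ):ℤ) - 1 = (m:ℤ) := by push_cast; ring
        have hc : α ((m:ℤ) - 1) * (α (-1) / α ((m:ℤ) - 1)) = α (-1) := by
          rw [mul_comm, div_mul_cancel₀ _ (hα _)]
        rw [hstep, Matrix.det_mul, ih h0, hdetB, h4, div_mul_eq_mul_div, hc]
  have hγ2 : γ ^ 2 = 1 := by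
    have h2 : α (-1 + (N:ℤ)) = α (-1) := hαper (-1)
    have h3 : ((N:ℤ) - 1) = -1 + (N:ℤ) := by ring
    calc γ ^ 2 = (γ • (1 : Matrix (Fin 2) (Fin 2) ℝ)).det := by
            simp [Matrix.det_smul]
      _ = (prodDesc B 0 N).det := by rw [hF]
      _ = 1 := by rw [hdetP N (by omega), h3, h2, div_self (hα _)]
  -- basic values
  have ha00 : a 0 = α 0 * atil 0 := by have := ha 0 0 (by omega); simpa using this
  have hb00 : b 0 = β 0 * atil 0 := by have := hb 0 0 (by omega); simpa using this
  have hp1' : p 1 0 = (0 - β 0) / α 0 := by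
    rw [hp1 0, ha00, hb00]
    rw [div_eq_div_iff (mul_ne_zero (hα 0) (hat 0)) (hα 0)]
    ring
  -- interior recurrence (divided by atil k)
  have interior : ∀ k i, 1 ≤ i → i < N →
      α ((i:ℕ) - 1 : ℕ) * p (N*k + i - 1) 0 + β i * p (N*k + i) 0
        + α i * p (N*k + i + 1) 0 = 0 := by
    intro k i h1 h2
    have hrec := hprec (N*k + i) (by omega) 0
    have hn1 : N*k + i - 1 = N*k + (i - 1) := by omega
    rw [hn1, ha k (i-1) (by omega), ha k i h2, hb k i h2] at hrec
    have hz : (α ((i:ℕ) - 1 : ℕ) * p (N*k + (i-1)) 0 + β i * p (N*k + i) 0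
        + α i * p (N*k + i + 1) 0) * atil k = 0 := by linear_combination hrec
    rw [hn1]
    rcases mul_eq_zero.mp hz with h | h
    · exact h
    · exact absurd h (hat k)
  -- vector lemma up to N
  have W : ∀ i, i ≤ N → prodDesc B 0 i *ᵥ ![(0:ℝ), 1]
      = ![if i = 0 then 0 else p (i-1) 0, p i 0] := by
    intro i hi
    induction i with
    | zero =>
      simp [prodDesc, Matrix.one_mulVec, hp0]
    | succ m ih =>
      have hm : m ≤ N := by omega
      have hstep : prodDesc B 0 (m+1) = B m * prodDesc B 0 m := by simp [prodDesc]
      rw [hstep, ← Matrix.mulVec_mulVec, ih hm]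
      rw [if_neg (Nat.succ_ne_zero m), Nat.add_sub_cancel]
      simp only [hB]
      rcases Nat.eq_zero_or_pos m with h0 | h0
      · subst h0
        rw [tmMulVec]
        funext j
        fin_cases j <;> norm_num [hp0, hp1']
      · rw [if_neg h0.ne']
        have hmN : m < N := by omega
        have hrec := interior 0 m h0 hmN
        simp only [mul_zero, zero_add] at hrec
        have hcast : ((m:ℤ) - 1) = ((m - 1 : ℕ) : ℤ) := by omega
        have hval : p (m+1) 0 = (-(α ((m-1:ℕ)) * p (m-1) 0) - β m * p m 0) / α m := by
          rw [eq_div_iff (hα _)]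
          linear_combination hrec
        rw [tmMulVec]
        have h2' : -(α ((m:ℤ)-1)/α m) * p (m-1) 0 + (0 - β m)/α m * p m 0 = p (m+1) 0 := by
          rw [hval, hcast]; ring
        rw [h2']
  -- extract p (N-1) 0 = 0 and p N 0 = γ
  have hWN := W N le_rfl
  rw [hF, Matrix.smul_mulVec, Matrix.one_mulVec] at hWN
  have hpN1 : p (N-1) 0 = 0 := by
    have h := congrFun hWN 0
    simp [if_neg (by omega : ¬ N = 0)] at h
    exact h.symm
  have hpN : p N 0 = γ := by
    have h := congrFun hWN 1
    simp at h
    exact h.symm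
  -- main key lemma
  have key : ∀ k, ∀ i ≤ N, p (N*k + i) 0 = γ^k * p i 0 := by
    intro k
    induction k with
    | zero => intro i hi; simp
    | succ k IH =>
      have base0 : p (N*(k+1) + 0) 0 = γ^(k+1) * p 0 0 := by
        have h1 : N*(k+1) + 0 = N*k + N := by ring
        rw [h1, IH N le_rfl, hpN, hp0]
        ring
      have prevzero : p (N*(k+1) - 1) 0 = 0 := by
        have h1 : N*(k+1) - 1 = N*k + (N-1) := by
          have h2 : N*(k+1) = N*k + N := by ring
          omega
        rw [h1, IH (N-1) (by omega), hpN1, mul_zero]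
      have base1 : p (N*(k+1) + 1) 0 = γ^(k+1) * p 1 0 := by
        have hpos : 1 ≤ N*(k+1) := Nat.one_le_iff_ne_zero.mpr
          (Nat.mul_ne_zero (by omega) (Nat.succ_ne_zero k))
        have hrec := hprec (N*(k+1)) hpos 0
        have hbv := hb (k+1) 0 (by omega)
        have hav := ha (k+1) 0 (by omega)
        rw [Nat.add_zero] at hbv hav
        have h0' : p (N*(k+1)) 0 = γ^(k+1) := by
          have h := base0; rw [Nat.add_zero, hp0, mul_one] at h; exact h
        rw [prevzero, hbv, hav, h0'] at hrec
        have hz : (α 0 * p (N*(k+1)+1) 0 + β 0 * γ^(k+1)) * atil (k+1) = 0 := by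
          push_cast at hrec
          linear_combination hrec
        have hz2 : α 0 * p (N*(k+1)+1) 0 + β 0 * γ^(k+1) = 0 :=
          (mul_eq_zero.mp hz).resolve_right (hat (k+1))
        rw [hp1', mul_div_assoc', eq_div_iff (hα 0)]
        linear_combination hz2
      have inner : ∀ i, i + 1 ≤ N →
          p (N*(k+1) + i) 0 = γ^(k+1) * p i 0 ∧
          p (N*(k+1) + (i+1)) 0 = γ^(k+1) * p (i+1) 0 := by
        intro i
        induction i with
        | zero => intro _; exact ⟨by simpa using base0, by simpa using base1⟩
        | succ m ihm =>
          intro hle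
          have hm := ihm (by omega)
          refine ⟨hm.2, ?_⟩
          have e1 := interior (k+1) (m+1) (by omega) (by omega)
          have e2 := interior 0 (m+1) (by omega) (by omega)
          have i1 : N*(k+1) + (m+1) - 1 = N*(k+1) + m := by omega
          have i2 : N*(k+1) + (m+1) + 1 = N*(k+1) + (m+1+1) := by omega
          rw [i1, i2] at e1
          simp only [mul_zero, zero_add] at e2
          have i3 : m + 1 - 1 = m := by omega
          rw [i3] at e1 e2
          have hgoal : α ((m+1:ℕ)) * p (N*(k+1) + (m+1+1)) 0
              = α ((m+1:ℕ)) * (γ^(k+1) * p (m+1+1) 0) := by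
            linear_combination e1 - γ^(k+1) * e2 - α ((m:ℕ)) * hm.1 - β ((m+1:ℕ)) * hm.2
          exact mul_left_cancel₀ (hα _) hgoal
      intro i hi
      cases i with
      | zero => simpa using base0
      | succ m => exact (inner m hi).2
  constructor
  · intro n
    obtain ⟨k, i, hiN, rfl⟩ : ∃ k i, i < N ∧ N*k + i = n :=
      ⟨n / N, n % N, Nat.mod_lt _ (by omega), Nat.div_add_mod n N⟩
    have e : N*k + i + 2*N = N*(k+2) + i := by ring
    rw [e, key (k+2) i hiN.le, key k i hiN.le, pow_add, hγ2, mul_one]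
  · intro hs
    have h0 := hs.tendsto_atTop_zero
    have hmono : Filter.Tendsto (fun k : ℕ => N * (2*k)) Filter.atTop Filter.atTop := by
      apply Filter.tendsto_atTop_mono (f := fun k : ℕ => (k : ℕ)) (fun k => ?_) Filter.tendsto_id
      calc k ≤ 2*k := by omega
        _ ≤ N*(2*k) := Nat.le_mul_of_pos_left _ (by omega)
    have hval : ∀ k : ℕ, p (N * (2*k)) 0 = 1 := by
      intro k
      have h := key (2*k) 0 (by omega)
      rw [Nat.add_zero, hp0, mul_one] at h
      rw [h, pow_mul, hγ2, one_pow]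
    have hcomp := h0.comp hmono
    have hconst : ((fun n : ℕ => p n 0 ^ 2) ∘ fun k : ℕ => N * (2*k)) = fun _ => (1:ℝ) := by
      funext k; simp [Function.comp, hval k]
    rw [hconst] at hcomp
    have hbad := tendsto_nhds_unique hcomp tendsto_const_nhds
    norm_num at hbad
end

section
/- For every n ≥ 1 and every x ∈ ℝ, the derivative of the orthonormal polynomial w_n satisfies w_n′(x) = (1/α₀) · Σ_{m=0}^{n−1} [ w_m(x)·w_{n−1}^{[1]}(x) − w_n(x)·w_{m−1}^{[1]}(x) ] · w_m(x), where w_{−1}^{[1]} = 0. -/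
/-! Differentiating the recurrence shows that `(w_n')` solves the three-term recurrence with the
inhomogeneity `w_{n+1}` and initial values `0, 1/α₀`. With `q_n := w_{n-1}^{[1]}` (and `q_0 = 0`),
which solves the homogeneous recurrence, the Casoratian `α_n (w_n q_{n+1} - w_{n+1} q_n)` is constant,
equal to `α₀`; this constancy makes the sums `Σ_{m<n} (w_m q_n - w_n q_m) w_m` solve the same
inhomogeneous recurrence (times `α₀`) with the same initial values, so they agree with `α₀ w_n'`. -/

open Finset

def ThreeTermRec (a b : ℕ → ℝ) (x : ℝ) (p : ℕ → ℝ) : Prop :=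
  ∀ n, a (n + 1) * p (n + 2) = (x - b (n + 1)) * p (n + 1) - a n * p n

def christoffelSum (p q : ℕ → ℝ) (n : ℕ) : ℝ :=
  ∑ m ∈ range n, (p m * q n - p n * q m) * p m

namespace ThreeTermRec

variable {a b : ℕ → ℝ} {x : ℝ} {p q : ℕ → ℝ}

theorem of_recurrence_shift {α β : ℤ → ℝ} {k : ℕ} {w : ℕ → ℝ}
    (h : ∀ n : ℕ, 1 ≤ n →
      α ((n : ℤ) + k - 1) * w (n - 1) + β ((n : ℤ) + k) * w n + α ((n : ℤ) + k) * w (n + 1)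
        = x * w n) :
    ThreeTermRec (fun j => α ((j : ℤ) + k)) (fun j => β ((j : ℤ) + k)) x w := by
  intro n
  have hn := h (n + 1) (Nat.le_add_left 1 n)
  rw [Nat.add_sub_cancel, Nat.cast_add_one, show (n + 1 + k - 1 : ℤ) = n + k by ring] at hn
  push_cast
  linear_combination hn

theorem cons_zero {r : ℕ → ℝ} (hr : ThreeTermRec (fun j => a (j + 1)) (fun j => b (j + 1)) x r)
    (h0 : r 0 = 1) (h1 : a 1 * r 1 = x - b 1) :
    ThreeTermRec a b x (fun m => if m = 0 then 0 else r (m - 1)) := by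
  rintro (_ | n)
  · simp [h0, h1]
  · simpa using hr n

theorem casoratian_eq (hp : ThreeTermRec a b x p) (hq : ThreeTermRec a b x q) (n : ℕ) :
    a n * (p n * q (n + 1) - p (n + 1) * q n) = a 0 * (p 0 * q 1 - p 1 * q 0) := by
  induction n with
  | zero => rfl
  | succ n ih => linear_combination ih + p (n + 1) * hq n - q (n + 1) * hp n

theorem christoffelSum_add_two (hp : ThreeTermRec a b x p) (hq : ThreeTermRec a b x q) {c : ℝ}
    (hc : ∀ n, a n * (p n * q (n + 1) - p (n + 1) * q n) = c) (n : ℕ) :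
    a (n + 1) * christoffelSum p q (n + 2)
      = c * p (n + 1) + (x - b (n + 1)) * christoffelSum p q (n + 1)
        - a n * christoffelSum p q n := by
  have hterm : ∀ m ∈ range (n + 2), a (n + 1) * ((p m * q (n + 2) - p (n + 2) * q m) * p m)
      = (x - b (n + 1)) * ((p m * q (n + 1) - p (n + 1) * q m) * p m)
        - a n * ((p m * q n - p n * q m) * p m) := fun m _ => by
    linear_combination (p m * p m) * hq n - (q m * p m) * hp n
  have hsum_succ : ∑ m ∈ range (n + 2), (p m * q (n + 1) - p (n + 1) * q m) * p m
      = christoffelSum p q (n + 1) := by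
    rw [sum_range_succ, sub_self, zero_mul, add_zero, christoffelSum]
  have hsum : ∑ m ∈ range (n + 2), (p m * q n - p n * q m) * p m
      = christoffelSum p q n + (p (n + 1) * q n - p n * q (n + 1)) * p (n + 1) := by
    rw [sum_range_succ, sum_range_succ, christoffelSum]; ring
  rw [christoffelSum, mul_sum, sum_congr rfl hterm, sum_sub_distrib, ← mul_sum, ← mul_sum,
    hsum_succ, hsum]
  linear_combination p (n + 1) * hc n

end ThreeTermRec

theorem hasDerivAt_of_threeTermRec {a b : ℕ → ℝ} {P : ℕ → ℝ → ℝ}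
    (hP : ∀ y, ThreeTermRec a b y (P · y)) (ha : ∀ n, a (n + 1) ≠ 0) {D : ℕ → ℝ} {x : ℝ}
    (h0 : HasDerivAt (P 0) (D 0) x) (h1 : HasDerivAt (P 1) (D 1) x)
    (hD : ∀ n, a (n + 1) * D (n + 2) = P (n + 1) x + (x - b (n + 1)) * D (n + 1) - a n * D n) :
    ∀ n, HasDerivAt (P n) (D n) x := by
  refine Nat.twoStepInduction h0 h1 fun n ih0 ih1 => ?_
  have hfun : P (n + 2) = fun y => ((y - b (n + 1)) * P (n + 1) y - a n * P n y) / a (n + 1) :=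
    funext fun y => by rw [eq_div_iff (ha n)]; linear_combination hP y n
  rw [hfun]
  refine ((((hasDerivAt_id x).sub_const (b (n + 1))).mul ih1).sub
    (ih0.const_mul (a n))).div_const (a (n + 1)) |>.congr_deriv ?_
  rw [div_eq_iff (ha n), id]
  linear_combination -hD n

theorem stmt2_general
    (α β : ℤ → ℝ) (hαpos : ∀ j, 0 < α j)
    -- `W k n` is the orthonormal polynomial `w_n^{[k]}` associated with the shifted sequences
    (W : ℕ → ℕ → ℝ → ℝ)
    (hW0 : ∀ (k : ℕ) (x : ℝ), W k 0 x = 1)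
    (hW1 : ∀ (k : ℕ) (x : ℝ), W k 1 x = (x - β k) / α k)
    (hWrec : ∀ k : ℕ, ∀ n : ℕ, 1 ≤ n → ∀ x : ℝ,
      α ((n : ℤ) + k - 1) * W k (n - 1) x + β ((n : ℤ) + k) * W k n x
        + α ((n : ℤ) + k) * W k (n + 1) x = x * W k n x)
    (n : ℕ) (x : ℝ) :
    deriv (W 0 n) x = (1 / α 0) * ∑ m ∈ Finset.range n,
      (W 0 m x * W 1 (n - 1) x - W 0 n x * (if m = 0 then 0 else W 1 (m - 1) x)) * W 0 m x := by
  have hα (j : ℤ) : α j ≠ 0 := (hαpos j).ne'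
  set q : ℝ → ℕ → ℝ := fun y m => if m = 0 then 0 else W 1 (m - 1) y
  have hp (y : ℝ) : ThreeTermRec (α ·) (β ·) y (W 0 · y) := by
    simpa using ThreeTermRec.of_recurrence_shift (w := (W 0 · y)) (hWrec 0 · · y)
  have hq (y : ℝ) : ThreeTermRec (α ·) (β ·) y (q y) := by
    refine ThreeTermRec.cons_zero (r := (W 1 · y)) ?_ (hW0 1 y) ?_
    · simpa using ThreeTermRec.of_recurrence_shift (w := (W 1 · y)) (hWrec 1 · · y)
    · rw [hW1]; push_cast; exact mul_div_cancel₀ _ (hα 1)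
  have hcas (m : ℕ) :
      α m * (W 0 m x * q x (m + 1) - W 0 (m + 1) x * q x m) = α 0 := by
    simpa [q, hW0] using (hp x).casoratian_eq (hq x) m
  let D (m : ℕ) : ℝ := christoffelSum (W 0 · x) (q x) m / α 0
  have hD0 : HasDerivAt (W 0 0) (D 0) x := by
    simpa [D, christoffelSum, funext (hW0 0)] using hasDerivAt_const x (1 : ℝ)
  have hD1 : HasDerivAt (W 0 1) (D 1) x := by
    simpa [D, christoffelSum, q, hW0, funext (hW1 0)] using
      ((hasDerivAt_id x).sub_const (β 0)).div_const (α 0)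
  have hDrec (m : ℕ) : α (m + 1 : ℕ) * D (m + 2)
      = W 0 (m + 1) x + (x - β (m + 1 : ℕ)) * D (m + 1) - α m * D m := by
    have h := (hp x).christoffelSum_add_two (hq x) hcas m
    simp only [D]
    field_simp [hα 0]
    linear_combination h
  rw [(hasDerivAt_of_threeTermRec hp (fun _ => hα _) hD0 hD1 hDrec n).deriv]
  cases n <;> simp [D, christoffelSum, q, div_eq_inv_mul]

theorem stmt2 (N : ℕ) (hN : 1 ≤ N)
    (α β : ℤ → ℝ) (hαpos : ∀ j, 0 < α j)
    (hαper : ∀ j, α (j + N) = α j) (hβper : ∀ j, β (j + N) = β j)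
    -- `W k n` is the orthonormal polynomial `w_n^{[k]}` associated with the shifted sequences
    (W : ℕ → ℕ → ℝ → ℝ)
    (hW0 : ∀ (k : ℕ) (x : ℝ), W k 0 x = 1)
    (hW1 : ∀ (k : ℕ) (x : ℝ), W k 1 x = (x - β k) / α k)
    (hWrec : ∀ k : ℕ, ∀ n : ℕ, 1 ≤ n → ∀ x : ℝ,
      α ((n : ℤ) + k - 1) * W k (n - 1) x + β ((n : ℤ) + k) * W k n x
        + α ((n : ℤ) + k) * W k (n + 1) x = x * W k n x)
    (n : ℕ) (hn : 1 ≤ n) (x : ℝ) :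
    deriv (W 0 n) x = (1 / α 0) * ∑ m ∈ Finset.range n,
      (W 0 m x * W 1 (n - 1) x - W 0 n x * (if m = 0 then 0 else W 1 (m - 1) x)) * W 0 m x :=
  stmt2_general α β hαpos W hW0 hW1 hWrec n x
end

section
/- For every i ≥ 1 and every x ∈ ℝ, the Turán-type identity w_i(x)·w_i^{[1]}(x) − w_{i+1}(x)·w_{i−1}^{[1]}(x) = α₀/α_i holds. -/
/-!
Both `n ↦ w_n(x)` and `n ↦ w_{n-1}^{[1]}(x)` solve the same three-term recurrence for `n ≥ 2`,
so their Casoratian `α_n (w_n w_n^{[1]} − w_{n+1} w_{n-1}^{[1]})` does not depend on `n ≥ 1`;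
at `n = 1` it equals `α₀` by direct computation.
-/

namespace ThreeTermRecurrence

variable {R : Type*} [CommRing R] (a b : ℕ → R) (x : R)

def IsSolutionAt (y : ℕ → R) (n : ℕ) : Prop :=
  a n * y n + b (n + 1) * y (n + 1) + a (n + 1) * y (n + 2) = x * y (n + 1)

def casoratian (p q : ℕ → R) (n : ℕ) : R :=
  a n * (p n * q (n + 1) - p (n + 1) * q n)

variable {a b x}

theorem casoratian_succ {p q : ℕ → R} {n : ℕ} (hp : IsSolutionAt a b x p n)
    (hq : IsSolutionAt a b x q n) : casoratian a p q (n + 1) = casoratian a p q n := by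
  unfold IsSolutionAt at hp hq
  unfold casoratian
  linear_combination p (n + 1) * hq - q (n + 1) * hp

theorem casoratian_eq_of_le {p q : ℕ → R} {m : ℕ}
    (hp : ∀ n, m ≤ n → IsSolutionAt a b x p n) (hq : ∀ n, m ≤ n → IsSolutionAt a b x q n)
    {n : ℕ} (hmn : m ≤ n) : casoratian a p q n = casoratian a p q m := by
  induction n, hmn using Nat.le_induction with
  | base => rfl
  | succ n hmn ih => rw [casoratian_succ (hp n hmn) (hq n hmn), ih]

end ThreeTermRecurrence

open ThreeTermRecurrence

theorem stmt4_general
    (α β : ℤ → ℝ) (hαpos : ∀ j, 0 < α j)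
    -- `W k n` is the orthonormal polynomial `w_n^{[k]}` associated with the shifted sequences
    (W : ℕ → ℕ → ℝ → ℝ)
    (hW0 : ∀ (k : ℕ) (x : ℝ), W k 0 x = 1)
    (hW1 : ∀ (k : ℕ) (x : ℝ), W k 1 x = (x - β k) / α k)
    (hWrec : ∀ k : ℕ, ∀ n : ℕ, 1 ≤ n → ∀ x : ℝ,
      α ((n : ℤ) + k - 1) * W k (n - 1) x + β ((n : ℤ) + k) * W k n x
        + α ((n : ℤ) + k) * W k (n + 1) x = x * W k n x)
    (i : ℕ) (hi : 1 ≤ i) (x : ℝ) :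
    W 0 i x * W 1 i x - W 0 (i + 1) x * W 1 (i - 1) x = α 0 / α i := by
  set a : ℕ → ℝ := fun n => α n
  set b : ℕ → ℝ := fun n => β n
  set p : ℕ → ℝ := fun n => W 0 n x
  set q : ℕ → ℝ := fun n => W 1 (n - 1) x
  have hp : ∀ n, 1 ≤ n → IsSolutionAt a b x p n := fun n _ => by
    simpa [IsSolutionAt, a, b, p] using hWrec 0 (n + 1) (by omega) x
  have hq : ∀ n, 1 ≤ n → IsSolutionAt a b x q n := fun n hn => by
    have hrec := hWrec 1 n hn x
    push_cast at hrec
    simpa [IsSolutionAt, a, b, q, add_comm] using hrec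
  have hbase : casoratian a p q 1 = α 0 := by
    have hrec := hWrec 0 1 le_rfl x
    simp only [Nat.cast_zero, Nat.cast_one, add_zero, sub_self, hW0, hW1] at hrec
    simp only [casoratian, a, p, q, Nat.cast_one, hW0, hW1, Nat.cast_zero]
    have h0 := (hαpos 0).ne'
    have h1 := (hαpos 1).ne'
    field_simp at hrec ⊢
    linear_combination -hrec
  have hconst := casoratian_eq_of_le hp hq hi
  rw [hbase] at hconst
  rw [eq_div_iff (hαpos i).ne', ← hconst]
  simp only [casoratian, a, p, q, Nat.add_sub_cancel]
  ring

theorem stmt4 (N : ℕ) (hN : 1 ≤ N)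
    (α β : ℤ → ℝ) (hαpos : ∀ j, 0 < α j)
    (hαper : ∀ j, α (j + N) = α j) (hβper : ∀ j, β (j + N) = β j)
    -- `W k n` is the orthonormal polynomial `w_n^{[k]}` associated with the shifted sequences
    (W : ℕ → ℕ → ℝ → ℝ)
    (hW0 : ∀ (k : ℕ) (x : ℝ), W k 0 x = 1)
    (hW1 : ∀ (k : ℕ) (x : ℝ), W k 1 x = (x - β k) / α k)
    (hWrec : ∀ k : ℕ, ∀ n : ℕ, 1 ≤ n → ∀ x : ℝ,
      α ((n : ℤ) + k - 1) * W k (n - 1) x + β ((n : ℤ) + k) * W k n x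
        + α ((n : ℤ) + k) * W k (n + 1) x = x * W k n x)
    (i : ℕ) (hi : 1 ≤ i) (x : ℝ) :
    W 0 i x * W 1 i x - W 0 (i + 1) x * W 1 (i - 1) x = α 0 / α i :=
  stmt4_general α β hαpos W hW0 hW1 hWrec i hi x
end

section
/- Fix an integer M ≥ 1 and x ∈ ℝ with w_M(x) ≠ 0. Let D_M(x) be the M×M real symmetric tridiagonal matrix with diagonal entries (D_M(x))_{i,i} = β_{i−1} − x for 1 ≤ i ≤ M and off-diagonal entries (D_M(x))_{i,i+1} = (D_M(x))_{i+1,i} = α_{i−1} for 1 ≤ i ≤ M−1 (all other entries zero). Then D_M(x) is invertible and for all indices 1 ≤ j ≤ i ≤ M one has (D_M(x)⁻¹)_{i,j} = (D_M(x)⁻¹)_{j,i} = − w_{j−1}(x)·w_{M−i}^{[i]}(x) / (α_{i−1}·w_M(x)). -/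
theorem hdiv1 (c1 N1 d1 R : ℝ) (h1 : d1 ≠ 0) (h : -(c1*N1) = R*d1) :
    c1 * (-N1/d1) + (0 + 0) = R := by
  field_simp
  linear_combination h

theorem hdiv2 (c1 c2 N1 N2 d1 d2 R : ℝ) (h1 : d1 ≠ 0) (h2 : d2 ≠ 0)
    (h : -(c1*N1*d2) - c2*N2*d1 = R*(d1*d2)) :
    c1 * (-N1/d1) + (c2 * (-N2/d2) + 0) = R := by
  field_simp
  linear_combination h

theorem hdiv2' (c1 c3 N1 N3 d1 d3 R : ℝ) (h1 : d1 ≠ 0) (h3 : d3 ≠ 0)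
    (h : -(c1*N1*d3) - c3*N3*d1 = R*(d1*d3)) :
    c1 * (-N1/d1) + (0 + c3 * (-N3/d3)) = R := by
  field_simp
  linear_combination h

theorem hdiv3 (c1 c2 c3 N1 N2 N3 d1 d2 d3 R : ℝ)
    (h1 : d1 ≠ 0) (h2 : d2 ≠ 0) (h3 : d3 ≠ 0)
    (h : -(c1*N1*(d2*d3)) - c2*N2*(d1*d3) - c3*N3*(d1*d2) = R*(d1*(d2*d3))) :
    c1 * (-N1/d1) + (c2 * (-N2/d2) + c3 * (-N3/d3)) = R := by
  field_simp
  linear_combination h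



theorem auxI (α β : ℕ → ℝ) (hαpos : ∀ n, 0 < α n)
    (W : ℕ → ℕ → ℝ → ℝ)
    (hW0 : ∀ (k : ℕ) (x : ℝ), W k 0 x = 1)
    (hW1 : ∀ (k : ℕ) (x : ℝ), W k 1 x = (x - β k) / α k)
    (hWrec : ∀ k : ℕ, ∀ n : ℕ, 1 ≤ n → ∀ x : ℝ,
      α (n + k - 1) * W k (n - 1) x + β (n + k) * W k n x
        + α (n + k) * W k (n + 1) x = x * W k n x)
    (x : ℝ) :
    ∀ n k : ℕ, α (k+1) * (α k * W k (n+1) x)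
      = α (k+1) * ((x - β k) * W (k+1) n x)
        - (α k)^2 * (if n = 0 then (0:ℝ) else W (k+2) (n-1) x) := by
  have hα : ∀ n, α n ≠ 0 := fun n => (hαpos n).ne'
  have hW1' : ∀ k, α k * W k 1 x = x - β k := by
    intro k; rw [hW1, mul_div_cancel₀ _ (hα k)]
  have hrec' : ∀ k n : ℕ, α (n+k) * W k n x + β (n+k+1) * W k (n+1) x
      + α (n+k+1) * W k (n+2) x = x * W k (n+1) x := by
    intro k n
    have h := hWrec k (n+1) (by omega) x
    simpa [show n+1+k-1 = n+k from by omega, show n+1+k = n+k+1 from by omega,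
      show n+1+1 = n+2 from by omega] using h
  intro n
  induction n using Nat.strong_induction_on with
  | _ n ih =>
    match n with
    | 0 =>
      intro k
      rw [if_pos rfl, hW0]
      linear_combination α (k+1) * hW1' k
    | 1 =>
      intro k
      have r := hrec' k 0
      simp only [Nat.zero_add, hW0] at r
      rw [if_neg (by omega : ¬(1 = 0))]
      simp only [Nat.add_sub_cancel, hW0]
      have h1 := hW1' k
      have h2 := hW1' (k+1)
      linear_combination α k * r + (x - β (k+1)) * h1 - (x - β k) * h2
    | (m+2) =>
      intro k
      have r1 := hrec' k (m+1)
      have r2 := hrec' (k+1) m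
      have ih1 := ih (m+1) (by omega) k
      have ih2 := ih m (by omega) k
      rw [if_neg (by omega : ¬(m+1 = 0)), Nat.add_sub_cancel] at ih1
      have r3 : α (m+k+2) * W (k+2) (m+1) x
          = (x - β (m+k+2)) * W (k+2) m x
            - α (m+k+1) * (if m = 0 then (0:ℝ) else W (k+2) (m-1) x) := by
        match m with
        | 0 =>
          simp only [Nat.zero_add, if_true, hW0, hW1]
          rw [mul_comm (α (k+2)), div_mul_cancel₀ _ (hα (k+2))]
          ring
        | m'+1 =>
          have r := hrec' (k+2) m'
          rw [if_neg (by omega : ¬(m'+1 = 0)), Nat.add_sub_cancel]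
          simp only [show m'+(k+2) = m'+k+2 from by omega,
            show m'+k+2+1 = m'+1+k+2 from by omega,
            show m'+2 = m'+1+1 from by omega,
            show m'+1+k+2 = m'+1+k+2 from rfl] at r
          rw [show m'+1+k+1 = m'+k+2 from by omega]
          linear_combination r
      simp only [show m+1+k = m+k+1 from by omega, show m+k+1+1 = m+k+2 from by omega,
        show m+1+1 = m+2 from by omega, show m+1+2 = m+3 from by omega,
        show m+(k+1) = m+k+1 from by omega] at r1 r2
      rw [if_neg (by omega : ¬(m+2 = 0)), show m+2-1 = m+1 from by omega]
      have key : α (m+k+2) * (α (k+1) * (α k * W k (m+2+1) x))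
          = α (m+k+2) * (α (k+1) * ((x - β k) * W (k+1) (m+2) x)
            - (α k)^2 * W (k+2) (m+1) x) := by
        linear_combination α (k+1) * α k * r1 - α (k+1) * (x - β k) * r2
          + (α k)^2 * r3 + (x - β (m+k+2)) * ih1 - α (m+k+1) * ih2
      exact mul_left_cancel₀ (hα (m+k+2)) key

theorem stmt5 (M : ℕ) (hM : 1 ≤ M)
    (α β : ℕ → ℝ) (hαpos : ∀ n, 0 < α n)
    -- `W k n` is the orthonormal polynomial `w_n^{[k]}` associated with the shifted sequences
    (W : ℕ → ℕ → ℝ → ℝ)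
    (hW0 : ∀ (k : ℕ) (x : ℝ), W k 0 x = 1)
    (hW1 : ∀ (k : ℕ) (x : ℝ), W k 1 x = (x - β k) / α k)
    (hWrec : ∀ k : ℕ, ∀ n : ℕ, 1 ≤ n → ∀ x : ℝ,
      α (n + k - 1) * W k (n - 1) x + β (n + k) * W k n x
        + α (n + k) * W k (n + 1) x = x * W k n x)
    (x : ℝ) (hx : W 0 M x ≠ 0)
    (D : Matrix (Fin M) (Fin M) ℝ)
    (hD : ∀ i j : Fin M, D i j =
      if i = j then β i - x
      else if (i : ℕ) + 1 = (j : ℕ) then α i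
      else if (j : ℕ) + 1 = (i : ℕ) then α j
      else 0) :
    IsUnit D ∧ ∀ i j : Fin M, (j : ℕ) ≤ (i : ℕ) →
      D⁻¹ i j = -(W 0 j x * W ((i : ℕ) + 1) (M - 1 - (i : ℕ)) x) / (α i * W 0 M x) ∧
      D⁻¹ j i = -(W 0 j x * W ((i : ℕ) + 1) (M - 1 - (i : ℕ)) x) / (α i * W 0 M x) := by
  have hα : ∀ n, α n ≠ 0 := fun n => (hαpos n).ne'
  have hW1' : ∀ k, α k * W k 1 x = x - β k := by
    intro k; rw [hW1, mul_div_cancel₀ _ (hα k)]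
  have hI := auxI α β hαpos W hW0 hW1 hWrec x
  have hrec' : ∀ k n : ℕ, α (n+k) * W k n x + β (n+k+1) * W k (n+1) x
      + α (n+k+1) * W k (n+2) x = x * W k (n+1) x := by
    intro k n
    have h := hWrec k (n+1) (by omega) x
    simpa [show n+1+k-1 = n+k from by omega, show n+1+k = n+k+1 from by omega,
      show n+1+1 = n+2 from by omega] using h
  have hA : ∀ n, α n * W 0 n x + (β (n+1) - x) * W 0 (n+1) x + α (n+1) * W 0 (n+2) x = 0 := by
    intro n
    have h := hrec' 0 n
    simp only [Nat.add_zero] at h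
    linear_combination h
  have hA0 : (β 0 - x) * W 0 0 x + α 0 * W 0 1 x = 0 := by
    rw [hW0]; linear_combination hW1' 0
  have hBtop : ∀ k, α k * W k 1 x + (β k - x) * W (k+1) 0 x = 0 := by
    intro k; rw [hW0]; linear_combination hW1' k
  have hB : ∀ i, i + 2 ≤ M → α i * α (i+1) * W i (M-i) x
      + (β i - x) * (α (i+1) * W (i+1) (M-1-i) x) + (α i)^2 * W (i+2) (M-2-i) x = 0 := by
    intro i hi
    have h := hI (M-1-i) i
    rw [if_neg (by omega : ¬(M-1-i = 0)), show M-1-i+1 = M-i from by omega,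
      show M-1-i-1 = M-2-i from by omega] at h
    linear_combination h
  have hC : ∀ i, i + 2 ≤ M → α (i+1) * (W 0 (i+1) x * W (i+1) (M-1-i) x)
      - α i * (W 0 i x * W (i+2) (M-2-i) x) = α (i+1) * W 0 M x := by
    intro i
    induction i with
    | zero =>
      intro h2
      have h := hI (M-1) 0
      rw [if_neg (by omega : ¬(M-1 = 0)), show M-1+1 = M from by omega,
        show M-1-1 = M-2 from by omega] at h
      have h1 := hW1' 0
      simp only [Nat.sub_zero, Nat.zero_add, hW0]
      have key : α 0 * (α 1 * (W 0 1 x * W 1 (M-1) x) - α 0 * (1 * W 2 (M-2) x))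
          = α 0 * (α 1 * W 0 M x) := by
        linear_combination α 1 * W 1 (M-1) x * h1 - h
      exact mul_left_cancel₀ (hα 0) key
    | succ i ihc =>
      intro h3
      have hCi := ihc (by omega)
      have hAi := hA i
      have hBi := hB (i+1) (by omega)
      rw [show M-(i+1) = M-1-i from by omega, show M-1-(i+1) = M-2-i from by omega,
        show M-2-(i+1) = M-3-i from by omega] at hBi
      rw [show M-1-(i+1) = M-2-i from by omega, show M-2-(i+1) = M-3-i from by omega,
        show i+1+1 = i+2 from by omega, show i+1+2 = i+3 from by omega]
      have key : α (i+1) * (α (i+2) * (W 0 (i+2) x * W (i+2) (M-2-i) x)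
          - α (i+1) * (W 0 (i+1) x * W (i+3) (M-3-i) x))
          = α (i+1) * (α (i+2) * W 0 M x) := by
        linear_combination α (i+2) * W (i+2) (M-2-i) x * hAi - W 0 (i+1) x * hBi
          + α (i+2) * hCi
      exact mul_left_cancel₀ (hα (i+1)) key
  set e : ℕ → ℕ → ℝ := fun p q =>
    -(W 0 (min p q) x * W (max p q + 1) (M - 1 - max p q) x) / (α (max p q) * W 0 M x)
    with he
  set E : Matrix (Fin M) (Fin M) ℝ := Matrix.of (fun i j => e (i:ℕ) (j:ℕ)) with hE
  have hDE : D * E = 1 := by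
    ext i k
    rw [Matrix.mul_apply, Matrix.one_apply]
    have hiM : (i:ℕ) < M := i.isLt
    have hkM : (k:ℕ) < M := k.isLt
    set f : ℕ → ℝ := fun jn =>
      (if jn = (i:ℕ) then (β (i:ℕ) - x) * e (i:ℕ) (k:ℕ) else 0)
        + ((if jn = (i:ℕ)+1 then α (i:ℕ) * e ((i:ℕ)+1) (k:ℕ) else 0)
          + (if jn = (i:ℕ)-1 then
              (if (i:ℕ) = 0 then 0 else α ((i:ℕ)-1) * e ((i:ℕ)-1) (k:ℕ)) else 0)) with hf
    have step1 : ∀ j : Fin M, D i j * E j k = f (j:ℕ) := by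
      intro j
      have hEjk : E j k = e (j:ℕ) (k:ℕ) := rfl
      rw [hD, hEjk, hf]
      simp only [Fin.ext_iff]
      split_ifs
      all_goals try omega
      all_goals try ring
      all_goals try (rw [show (j:ℕ) = (i:ℕ) from by omega]; try ring)
      all_goals try (rw [show (j:ℕ) = (i:ℕ)+1 from by omega]; try ring)
      all_goals try (rw [show (j:ℕ) = (i:ℕ)-1 from by omega]; try ring)
    rw [Finset.sum_congr rfl (fun j _ => step1 j), Fin.sum_univ_eq_sum_range f M, hf]
    simp only []
    rw [Finset.sum_add_distrib, Finset.sum_add_distrib,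
      Finset.sum_ite_eq' (Finset.range M), Finset.sum_ite_eq' (Finset.range M),
      Finset.sum_ite_eq' (Finset.range M),
      if_pos (Finset.mem_range.mpr hiM),
      if_pos (Finset.mem_range.mpr (show (i:ℕ)-1 < M by omega))]
    have hone : (if i = k then (1:ℝ) else 0) = (if (i:ℕ) = (k:ℕ) then 1 else 0) := by
      simp [Fin.ext_iff]
    rw [hone]
    simp only [Finset.mem_range, he]
    rcases lt_trichotomy (i:ℕ) (k:ℕ) with hlt | heq | hgt
    · -- i < k : off-diagonal, zero
      rw [if_neg (show ¬((i:ℕ) = (k:ℕ)) from by omega),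
        if_pos (show (i:ℕ)+1 < M from by omega)]
      rw [show min (i:ℕ) (k:ℕ) = (i:ℕ) from by omega,
        show max (i:ℕ) (k:ℕ) = (k:ℕ) from by omega,
        show min ((i:ℕ)+1) (k:ℕ) = (i:ℕ)+1 from by omega,
        show max ((i:ℕ)+1) (k:ℕ) = (k:ℕ) from by omega]
      by_cases h0 : (i:ℕ) = 0
      · rw [if_pos h0, h0]
        refine hdiv2 _ _ _ _ _ _ _ ?_ ?_ ?_
        · exact mul_ne_zero (hα _) hx
        · exact mul_ne_zero (hα _) hx
        · linear_combination -((α (k:ℕ) * W 0 M x) * W ((k:ℕ)+1) (M-1-(k:ℕ)) x) * hA0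
      · rw [if_neg h0]
        obtain ⟨n, hn⟩ : ∃ n, (i:ℕ) = n+1 := ⟨(i:ℕ)-1, by omega⟩
        rw [hn, show n+1-1 = n from by omega,
          show min n (k:ℕ) = n from by omega,
          show max n (k:ℕ) = (k:ℕ) from by omega]
        refine hdiv3 _ _ _ _ _ _ _ _ _ _ ?_ ?_ ?_ ?_
        · exact mul_ne_zero (hα _) hx
        · exact mul_ne_zero (hα _) hx
        · exact mul_ne_zero (hα _) hx
        · linear_combination -((α (k:ℕ) * W 0 M x) * (α (k:ℕ) * W 0 M x)
            * W ((k:ℕ)+1) (M-1-(k:ℕ)) x) * hA n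
    · -- diagonal
      rw [if_pos heq, ← heq]
      rw [show min (i:ℕ) (i:ℕ) = (i:ℕ) from by omega,
        show max (i:ℕ) (i:ℕ) = (i:ℕ) from by omega]
      by_cases h0 : (i:ℕ) = 0
      · rw [h0]
        by_cases h1 : (0:ℕ)+1 < M
        · -- M ≥ 2
          rw [if_pos h1, if_pos rfl]
          rw [show min (0+1) 0 = 0 from by omega, show max (0+1) 0 = 0+1 from by omega]
          rw [hW0, show (0:ℕ)+1 = 1 from rfl, show (1:ℕ)+1 = 2 from rfl,
            show M-1-0 = M-1 from by omega, show M-1-1 = M-2 from by omega]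
          have hB0 := hB 0 (by omega)
          rw [show (0:ℕ)+1 = 1 from rfl, show (0:ℕ)+2 = 2 from rfl,
            show M-0 = M from by omega, show M-1-0 = M-1 from by omega,
            show M-2-0 = M-2 from by omega] at hB0
          refine hdiv2 _ _ _ _ _ _ _ ?_ ?_ ?_
          · exact mul_ne_zero (hα _) hx
          · exact mul_ne_zero (hα _) hx
          · linear_combination -(W 0 M x) * hB0
        · -- M = 1
          have hM1 : M = 1 := by omega
          rw [if_neg h1, if_pos rfl, hM1]
          rw [show (1:ℕ)-1-0 = 0 from by omega, hW0, hW0]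
          have hx1 : W 0 1 x ≠ 0 := hM1 ▸ hx
          refine hdiv1 _ _ _ _ ?_ ?_
          · exact mul_ne_zero (hα _) hx1
          · linear_combination -(hW1' 0)
      · obtain ⟨n, hn⟩ : ∃ n, (i:ℕ) = n+1 := ⟨(i:ℕ)-1, by omega⟩
        rw [hn, if_neg (by omega : ¬(n+1 = 0)), show n+1-1 = n from by omega,
          show min n (n+1) = n from by omega, show max n (n+1) = n+1 from by omega]
        by_cases h1 : n+1+1 < M
        · -- interior diagonal
          rw [if_pos h1]
          rw [show min (n+1+1) (n+1) = n+1 from by omega,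
            show max (n+1+1) (n+1) = n+1+1 from by omega,
            show M-1-(n+1) = M-2-n from by omega,
            show M-1-(n+1+1) = M-3-n from by omega,
            show n+1+1+1 = n+3 from by omega, show n+1+1 = n+2 from by omega]
          have hBn := hB (n+1) (by omega)
          rw [show M-(n+1) = M-1-n from by omega, show M-1-(n+1) = M-2-n from by omega,
            show M-2-(n+1) = M-3-n from by omega] at hBn
          have hCn := hC n (by omega)
          refine hdiv3 _ _ _ _ _ _ _ _ _ _ ?_ ?_ ?_ ?_
          · exact mul_ne_zero (hα _) hx
          · exact mul_ne_zero (hα _) hx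
          · exact mul_ne_zero (hα _) hx
          · linear_combination (α (n+1) * (W 0 M x * W 0 M x))
              * (α (n+2) * hCn - W 0 (n+1) x * hBn)
        · -- top diagonal, n+2 = M
          have hn2 : n+2 = M := by omega
          rw [if_neg h1]
          rw [show M-1-(n+1) = 0 from by omega, show n+1+1 = n+2 from by omega, hW0]
          have hAn := hA n
          rw [show n+2 = M from hn2] at hAn
          refine hdiv2' _ _ _ _ _ _ _ ?_ ?_ ?_
          · exact mul_ne_zero (hα _) hx
          · exact mul_ne_zero (hα _) hx
          · linear_combination -(α (n+1) * W 0 M x) * hAn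
    · -- i > k : off-diagonal, zero
      rw [if_neg (show ¬((i:ℕ) = (k:ℕ)) from by omega),
        if_neg (by omega : ¬((i:ℕ) = 0))]
      obtain ⟨n, hn⟩ : ∃ n, (i:ℕ) = n+1 := ⟨(i:ℕ)-1, by omega⟩
      rw [hn, show n+1-1 = n from by omega,
        show min (n+1) (k:ℕ) = (k:ℕ) from by omega,
        show max (n+1) (k:ℕ) = n+1 from by omega,
        show min n (k:ℕ) = (k:ℕ) from by omega,
        show max n (k:ℕ) = n from by omega]
      by_cases h1 : n+1+1 < M
      · rw [if_pos h1,
          show min (n+1+1) (k:ℕ) = (k:ℕ) from by omega,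
          show max (n+1+1) (k:ℕ) = n+1+1 from by omega,
          show M-1-(n+1) = M-2-n from by omega,
          show M-1-(n+1+1) = M-3-n from by omega,
          show n+1+1+1 = n+3 from by omega, show n+1+1 = n+2 from by omega]
        have hBn := hB (n+1) (by omega)
        rw [show M-(n+1) = M-1-n from by omega, show M-1-(n+1) = M-2-n from by omega,
          show M-2-(n+1) = M-3-n from by omega] at hBn
        refine hdiv3 _ _ _ _ _ _ _ _ _ _ ?_ ?_ ?_ ?_
        · exact mul_ne_zero (hα _) hx
        · exact mul_ne_zero (hα _) hx
        · exact mul_ne_zero (hα _) hx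
        · linear_combination -(α n * (W 0 M x * W 0 M x) * W 0 (k:ℕ) x) * hBn
      · rw [if_neg h1,
          show M-1-(n+1) = 0 from by omega, show M-1-n = 1 from by omega,
          show n+1+1 = n+2 from by omega]
        rw [hW0]
        have hT := hBtop (n+1)
        rw [hW0] at hT
        refine hdiv2' _ _ _ _ _ _ _ ?_ ?_ ?_
        · exact mul_ne_zero (hα _) hx
        · exact mul_ne_zero (hα _) hx
        · linear_combination -(α n * W 0 M x * W 0 (k:ℕ) x) * hT
  have hED : E * D = 1 := mul_eq_one_comm.mp hDE
  have hinv : D⁻¹ = E := Matrix.inv_eq_right_inv hDE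
  refine ⟨⟨⟨D, E, hDE, hED⟩, rfl⟩, ?_⟩
  intro i j hji
  constructor
  · rw [hinv]
    show e (i:ℕ) (j:ℕ) = _
    simp only [he]
    rw [show min (i:ℕ) (j:ℕ) = (j:ℕ) from by omega,
      show max (i:ℕ) (j:ℕ) = (i:ℕ) from by omega]
  · rw [hinv]
    show e (j:ℕ) (i:ℕ) = _
    simp only [he]
    rw [show min (j:ℕ) (i:ℕ) = (j:ℕ) from by omega,
      show max (j:ℕ) (i:ℕ) = (i:ℕ) from by omega]
end

section
/- Assume ∏_{i=0}^{N−1} B̂^i(0) = γ·Id with γ ∈ {−1, 1} (so that γ = w_N(0)). Define the N×N real matrices (indices 1,…,N): E with E_{N,1} = 1 and all other entries 0; F with entries F_{i,j} = − w_{i−1}(0)·w_{N−j}^{[j]}(0)/(γ·α_{j−1}); and D_N(0), the symmetric tridiagonal matrix with diagonal entries (D_N(0))_{i,i} = β_{i−1} and off-diagonal entries (D_N(0))_{i,i+1} = (D_N(0))_{i+1,i} = α_{i−1}. Then D_N(0) is invertible and the following four identities hold: F·Eᵀ = 0, Eᵀ·F = 0, D_N(0)⁻¹·E = F·E, and γ·F·D_N(0)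 + α_{N−1}·F·E = 0. -/
/-!
Write `w = (w_0(0), …, w_{N-1}(0))` and `s_j = w^{[j+1]}_{N-1-j}(0) / α_j`. The products of
transfer matrices carry `(0, 1)` to `(w^{[k]}_{n-1}, w^{[k]}_n)`, so the monodromy hypothesis
gives `w_{N-1}(0) = 0`, `w_N(0) = γ` and, on the other column, `w^{[1]}_{N-1}(0) = 0`.
The three-term recurrence says `D_N(0) w = -α_{N-1} w_N(0) e_N`; factoring the first transfer
matrix off the product instead of the last one gives a recurrence in the shift index `k`, which
says `D_N(0) s = -w_N(0) e_1`. Now `E = e_N e_1ᵀ` and `F = -γ⁻¹ w sᵀ` have rank one, and the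
four identities reduce to these facts and `γ² = 1`. Finally `D_N(0)` is invertible: the
recurrence determines a kernel vector from its first entry, so it is a multiple of `w`, which
lies outside the kernel because `w_N(0) ≠ 0`.
-/

open scoped Matrix

open Matrix

lemma prodDesc_succ' (C : ℤ → Matrix (Fin 2) (Fin 2) ℝ) (n₀ : ℤ) (n : ℕ) :
    prodDesc C n₀ (n + 1) = prodDesc C (n₀ + 1) n * C n₀ := by
  induction n with
  | zero => simp [prodDesc]
  | succ n ih =>
    rw [prodDesc, ih, prodDesc, Matrix.mul_assoc]
    congr 2
    push_cast
    ring

lemma transferMatrix_mulVec (α β : ℤ → ℝ) (j : ℤ) (x a b : ℝ) :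
    transferMatrix α β j x *ᵥ ![a, b] = ![b, -(α (j - 1) / α j) * a + (x - β j) / α j * b] := by
  ext i
  fin_cases i <;> simp [transferMatrix, mulVec, dotProduct]

lemma prodDesc_transferMatrix_mulVec_one_zero (α β : ℤ → ℝ) (k : ℤ) (n : ℕ) (x : ℝ) :
    prodDesc (fun j => transferMatrix α β j x) k (n + 1) *ᵥ ![1, 0]
      = -(α (k - 1) / α k) • (prodDesc (fun j => transferMatrix α β j x) (k + 1) n *ᵥ ![0, 1]) := by
  rw [prodDesc_succ', ← mulVec_mulVec, transferMatrix_mulVec, ← mulVec_smul]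
  congr 1
  ext i
  fin_cases i <;> simp

def jacobiMatrix (α β : ℤ → ℝ) (N : ℕ) : Matrix (Fin N) (Fin N) ℝ :=
  Matrix.of fun i j =>
    if i = j then β (i : ℕ)
    else if (i : ℕ) + 1 = (j : ℕ) then α (i : ℕ)
    else if (j : ℕ) + 1 = (i : ℕ) then α (j : ℕ)
    else 0

lemma jacobiMatrix_transpose (α β : ℤ → ℝ) (N : ℕ) :
    (jacobiMatrix α β N)ᵀ = jacobiMatrix α β N := by
  ext i j
  simp only [transpose_apply, jacobiMatrix, of_apply, Fin.ext_iff]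
  split_ifs <;> first | rfl | omega | (congr 1; omega)

lemma jacobiMatrix_mulVec_apply (α β : ℤ → ℝ) (N : ℕ) (u : ℕ → ℝ) (i : Fin N) :
    (jacobiMatrix α β N *ᵥ fun j => u j) i
      = (if (i : ℕ) = 0 then 0 else α ((i : ℕ) - 1 : ℕ) * u (i - 1)) + β (i : ℕ) * u i
        + (if (i : ℕ) + 1 = N then 0 else α (i : ℕ) * u (i + 1)) := by
  have hsplit : ∀ m (hm : m < N), jacobiMatrix α β N i ⟨m, hm⟩ * u m
      = (if m = (i : ℕ) - 1 then
            (if (i : ℕ) = 0 then 0 else α ((i : ℕ) - 1 : ℕ) * u (i - 1)) else 0)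
        + (if m = i then β (i : ℕ) * u i else 0)
        + (if m = (i : ℕ) + 1 then
            (if (i : ℕ) + 1 = N then 0 else α (i : ℕ) * u (i + 1)) else 0) := by
    intro m hm
    simp only [jacobiMatrix, of_apply, Fin.ext_iff]
    split_ifs <;> first | omega | (subst m; ring) | ring
  rw [mulVec, dotProduct, Finset.sum_fin_eq_sum_range,
    Finset.sum_congr rfl fun m hm => by rw [dif_pos (Finset.mem_range.1 hm), hsplit]]
  simp only [Finset.sum_add_distrib, Finset.sum_ite_eq', Finset.mem_range]
  have := i.isLt
  split_ifs <;> first | omega | ring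

lemma eq_zero_of_jacobiMatrix_mulVec {α β : ℤ → ℝ} {N : ℕ} (hα : ∀ j, α j ≠ 0) (x : ℝ)
    {u : ℕ → ℝ}
    (hu : ∀ i : Fin N, (i : ℕ) + 1 < N → (jacobiMatrix α β N *ᵥ fun j => u j) i = x * u i)
    (h0 : u 0 = 0) {n : ℕ} (hn : n < N) : u n = 0 := by
  have key : ∀ n, n + 1 < N → u n = 0 ∧ u (n + 1) = 0 := by
    intro n
    induction n with
    | zero =>
      intro h
      have row := hu ⟨0, by omega⟩ h
      rw [jacobiMatrix_mulVec_apply] at row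
      exact ⟨h0, by simpa [h0, show 1 ≠ N by omega, hα] using row⟩
    | succ n ih =>
      intro h
      obtain ⟨h₁, h₂⟩ := ih (by omega)
      have row := hu ⟨n + 1, by omega⟩ h
      rw [jacobiMatrix_mulVec_apply] at row
      exact ⟨h₂, by simpa [h₁, h₂, show n + 1 + 1 ≠ N by omega, hα] using row⟩
  rcases n with _ | n
  · exact h0
  · exact (key n (by omega)).2

structure IsAssociatedPolynomials (α β : ℤ → ℝ) (W : ℕ → ℕ → ℝ → ℝ) : Prop where
  zero : ∀ (k : ℕ) (x : ℝ), W k 0 x = 1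
  one : ∀ (k : ℕ) (x : ℝ), W k 1 x = (x - β k) / α k
  recurrence : ∀ k : ℕ, ∀ n : ℕ, 1 ≤ n → ∀ x : ℝ,
    α ((n : ℤ) + k - 1) * W k (n - 1) x + β ((n : ℤ) + k) * W k n x
      + α ((n : ℤ) + k) * W k (n + 1) x = x * W k n x

namespace IsAssociatedPolynomials

variable {α β : ℤ → ℝ} {W : ℕ → ℕ → ℝ → ℝ} {N : ℕ}

lemma succ_succ (hW : IsAssociatedPolynomials α β W) (hα : ∀ j, α j ≠ 0) (k n : ℕ) (x : ℝ) :
    W k (n + 2) x = -(α (k + n) / α (k + n + 1)) * W k n x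
      + (x - β (k + n + 1)) / α (k + n + 1) * W k (n + 1) x := by
  have h := hW.recurrence k (n + 1) (by omega) x
  have e₁ : ((n + 1 : ℕ) : ℤ) + k - 1 = k + n := by push_cast; ring
  have e₂ : ((n + 1 : ℕ) : ℤ) + k = k + n + 1 := by push_cast; ring
  rw [e₁, e₂, Nat.add_sub_cancel] at h
  have := hα (k + n + 1)
  field_simp
  linear_combination h

lemma prodDesc_transferMatrix_mulVec (hW : IsAssociatedPolynomials α β W) (hα : ∀ j, α j ≠ 0)
    (k n : ℕ) (x : ℝ) :
    prodDesc (fun j => transferMatrix α β j x) k (n + 1) *ᵥ ![0, 1]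
      = ![W k n x, W k (n + 1) x] := by
  induction n with
  | zero =>
    rw [prodDesc, prodDesc, Matrix.mul_one, transferMatrix_mulVec]
    simp [hW.zero, hW.one]
  | succ n ih =>
    rw [prodDesc, ← mulVec_mulVec, ih, transferMatrix_mulVec, hW.succ_succ hα]
    push_cast
    ring_nf

lemma prodDesc_transferMatrix_mulVec_apply_one (hW : IsAssociatedPolynomials α β W)
    (hα : ∀ j, α j ≠ 0) (k n : ℕ) (x : ℝ) :
    (prodDesc (fun j => transferMatrix α β j x) k n *ᵥ ![0, 1]) 1 = W k n x := by
  cases n with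
  | zero => simp [prodDesc, hW.zero]
  | succ n => simp [hW.prodDesc_transferMatrix_mulVec hα]

/-- Comes from splitting off the first factor `B̂^k` of the transfer product, not the last. -/
lemma succ_succ_eq_shift (hW : IsAssociatedPolynomials α β W) (hα : ∀ j, α j ≠ 0)
    (k m : ℕ) (x : ℝ) :
    W k (m + 2) x = -(α k / α (k + 1)) * W (k + 2) m x
      + (x - β k) / α k * W (k + 1) (m + 1) x := by
  have h := hW.prodDesc_transferMatrix_mulVec hα k (m + 1) x
  have hsplit : ![(1 : ℝ), (x - β k) / α k] = ![1, 0] + ((x - β k) / α k) • ![0, 1] := by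
    ext i; fin_cases i <;> simp
  rw [prodDesc_succ', ← mulVec_mulVec, transferMatrix_mulVec, mul_zero, zero_add, mul_one,
    hsplit, mulVec_add, mulVec_smul, prodDesc_transferMatrix_mulVec_one_zero] at h
  simp only [← Nat.cast_succ] at h
  have h₁ := congrFun h 1
  simp only [Pi.add_apply, Pi.smul_apply, smul_eq_mul,
    hW.prodDesc_transferMatrix_mulVec_apply_one hα] at h₁
  simpa using h₁.symm

lemma boundary_values_of_prodDesc_eq_smul_one (hW : IsAssociatedPolynomials α β W)
    (hα : ∀ j, α j ≠ 0) (hN : 0 < N) {x γ : ℝ}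
    (hProd : prodDesc (fun j => transferMatrix α β j x) 0 N = γ • 1) :
    W 0 (N - 1) x = 0 ∧ W 0 N x = γ ∧ W 1 (N - 1) x = 0 := by
  obtain ⟨n, rfl⟩ : ∃ n, N = n + 1 := ⟨N - 1, by omega⟩
  have hcol₂ := hW.prodDesc_transferMatrix_mulVec hα 0 n x
  have hcol₁ := prodDesc_transferMatrix_mulVec_one_zero α β 0 n x
  rw [Nat.cast_zero, hProd] at hcol₂
  rw [hProd, show (0 : ℤ) + 1 = (1 : ℕ) by norm_num] at hcol₁
  have h₁ := congrFun hcol₁ 1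
  rw [Pi.smul_apply, hW.prodDesc_transferMatrix_mulVec_apply_one hα] at h₁
  refine ⟨?_, ?_, ?_⟩
  · simpa using (congrFun hcol₂ 0).symm
  · simpa using (congrFun hcol₂ 1).symm
  · simpa [hα] using h₁.symm

lemma recurrence_zero (hW : IsAssociatedPolynomials α β W) (hα : ∀ j, α j ≠ 0) (x : ℝ) (n : ℕ) :
    (if n = 0 then 0 else α (n - 1 : ℕ) * W 0 (n - 1) x) + β n * W 0 n x
      + α n * W 0 (n + 1) x = x * W 0 n x := by
  rcases Nat.eq_zero_or_pos n with rfl | hn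
  · have := hα 0
    simp only [if_true, hW.zero, hW.one, Nat.cast_zero]
    field_simp
    ring
  · have h := hW.recurrence 0 n hn x
    rw [if_neg hn.ne', Nat.cast_sub hn]
    simpa using h

lemma jacobiMatrix_mulVec (hW : IsAssociatedPolynomials α β W) (hα : ∀ j, α j ≠ 0) (x : ℝ)
    {last : Fin N} (hlast : (last : ℕ) + 1 = N) :
    jacobiMatrix α β N *ᵥ (fun i => W 0 i x)
      = x • (fun i : Fin N => W 0 i x) - (α (last : ℕ) * W 0 N x) • Pi.single last 1 := by
  ext i
  rw [jacobiMatrix_mulVec_apply α β N (fun n => W 0 n x)]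
  have h := hW.recurrence_zero hα x i
  simp only [Pi.sub_apply, Pi.smul_apply, smul_eq_mul, Pi.single_apply]
  by_cases hi : i = last
  · subst hi
    simp only [hlast, if_true, mul_one] at h ⊢
    linear_combination h
  · have hi' : (i : ℕ) + 1 ≠ N := fun h' => hi (Fin.ext (by omega))
    simp only [hi, hi', if_false, mul_zero, sub_zero] at h ⊢
    linear_combination h

lemma jacobiMatrix_mulVec_shift (hW : IsAssociatedPolynomials α β W) (hα : ∀ j, α j ≠ 0)
    (x : ℝ) {first : Fin N} (hfirst : (first : ℕ) = 0) :
    jacobiMatrix α β N *ᵥ (fun j => W (j + 1) (N - 1 - j) x / α j)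
      = x • (fun j : Fin N => W (j + 1) (N - 1 - j) x / α j)
        - W 0 N x • Pi.single first 1 := by
  ext j
  rw [jacobiMatrix_mulVec_apply α β N (fun n => W (n + 1) (N - 1 - n) x / α n)]
  simp only [Pi.sub_apply, Pi.smul_apply, smul_eq_mul, Pi.single_apply]
  have hj := j.isLt
  have hleft : (if (j : ℕ) = 0 then 0 else
      α ((j : ℕ) - 1 : ℕ) * (W ((j : ℕ) - 1 + 1) (N - 1 - ((j : ℕ) - 1)) x / α ((j : ℕ) - 1 : ℕ)))
      + W 0 N x * (if j = first then 1 else 0) = W j (N - j) x := by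
    by_cases hj0 : (j : ℕ) = 0
    · have : j = first := Fin.ext (by omega)
      subst this
      simp [hfirst]
    · have : j ≠ first := fun h => hj0 (by rw [h, hfirst])
      rw [if_neg hj0, if_neg this, Nat.sub_add_cancel (by omega), mul_div_cancel₀ _ (hα _),
        show N - 1 - ((j : ℕ) - 1) = N - j by omega, mul_zero, add_zero]
  suffices W j (N - j) x + β (j : ℕ) * (W (j + 1) (N - 1 - j) x / α j)
      + (if (j : ℕ) + 1 = N then 0
        else α j * (W (j + 1 + 1) (N - 1 - (j + 1)) x / α (j + 1 : ℕ)))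
      = x * (W (j + 1) (N - 1 - j) x / α j) by
    linear_combination this + hleft
  have := hα j
  by_cases hjN : (j : ℕ) + 1 = N
  · rw [if_pos hjN, show N - j = 1 by omega, show N - 1 - j = 0 by omega, hW.one, hW.zero]
    field_simp
    ring
  · obtain ⟨m, hm⟩ : ∃ m, N = j + m + 2 := ⟨N - j - 2, by omega⟩
    rw [if_neg hjN, show N - j = m + 2 by omega, show N - 1 - j = m + 1 by omega,
      show N - 1 - (j + 1) = m by omega, hW.succ_succ_eq_shift hα]
    have := hα (j + 1 : ℕ)
    push_cast at this ⊢
    field_simp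
    ring

lemma isUnit_jacobiMatrix (hW : IsAssociatedPolynomials α β W) (hα : ∀ j, α j ≠ 0) (hN : 0 < N)
    (hwN : W 0 N 0 ≠ 0) : IsUnit (jacobiMatrix α β N) := by
  rw [isUnit_iff_isUnit_det, isUnit_iff_ne_zero]
  intro hdet
  obtain ⟨v, hv, hJv⟩ := exists_mulVec_eq_zero_iff.2 hdet
  let last : Fin N := ⟨N - 1, by omega⟩
  let u : ℕ → ℝ := fun n => if h : n < N then v ⟨n, h⟩ else 0
  have hvu : v = fun j : Fin N => u j := by ext j; simp [u, j.isLt]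
  set c := u 0
  have hJw := hW.jacobiMatrix_mulVec hα 0 (last := last) (by simp [last]; omega)
  have hJd : jacobiMatrix α β N *ᵥ (fun j => u j - c * W 0 j 0)
      = (c * (α (last : ℕ) * W 0 N 0)) • Pi.single last 1 := by
    rw [show (fun j : Fin N => u j - c * W 0 j 0) = v - c • fun j : Fin N => W 0 j 0 by
      rw [hvu]; rfl, mulVec_sub, mulVec_smul, hJv, hJw]
    module
  have hd : ∀ n < N, u n - c * W 0 n 0 = 0 := fun n hn =>
    eq_zero_of_jacobiMatrix_mulVec hα 0 (u := fun n => u n - c * W 0 n 0) (fun i hi => by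
      rw [hJd, Pi.smul_apply, Pi.single_eq_of_ne (Fin.ne_of_val_ne (show (i : ℕ) ≠ N - 1 by omega)),
        smul_zero, zero_mul]) (by simp [c, hW.zero]) hn
  have hc : c = 0 := by
    have h := congrFun hJd last
    rw [show (fun j : Fin N => u j - c * W 0 j 0) = 0 from funext fun j => hd j j.isLt,
      mulVec_zero] at h
    simpa [hα, hwN] using h
  apply hv
  ext j
  simpa [hvu, hc] using hd j j.isLt

end IsAssociatedPolynomials

theorem stmt7_general (N : ℕ) (hN : 2 ≤ N)
    (α β : ℤ → ℝ) (hαpos : ∀ j, 0 < α j)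
    -- `W k n` is the orthonormal polynomial `w_n^{[k]}` associated with the shifted sequences
    (W : ℕ → ℕ → ℝ → ℝ)
    (hW0 : ∀ (k : ℕ) (x : ℝ), W k 0 x = 1)
    (hW1 : ∀ (k : ℕ) (x : ℝ), W k 1 x = (x - β k) / α k)
    (hWrec : ∀ k : ℕ, ∀ n : ℕ, 1 ≤ n → ∀ x : ℝ,
      α ((n : ℤ) + k - 1) * W k (n - 1) x + β ((n : ℤ) + k) * W k n x
        + α ((n : ℤ) + k) * W k (n + 1) x = x * W k n x)
    (γ : ℝ) (hγ : γ = -1 ∨ γ = 1)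
    (hProd : prodDesc (fun j => transferMatrix α β j 0) 0 N
      = γ • (1 : Matrix (Fin 2) (Fin 2) ℝ))
    (E F D : Matrix (Fin N) (Fin N) ℝ)
    (hE : ∀ i j : Fin N, E i j = if (i : ℕ) = N - 1 ∧ (j : ℕ) = 0 then 1 else 0)
    (hF : ∀ i j : Fin N, F i j =
      -(W 0 i 0 * W ((j : ℕ) + 1) (N - 1 - (j : ℕ)) 0) / (γ * α (j : ℕ)))
    (hD : ∀ i j : Fin N, D i j =
      if i = j then β (i : ℕ)
      else if (i : ℕ) + 1 = (j : ℕ) then α (i : ℕ)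
      else if (j : ℕ) + 1 = (i : ℕ) then α (j : ℕ)
      else 0) :
    IsUnit D ∧ F * Eᵀ = 0 ∧ Eᵀ * F = 0 ∧ D⁻¹ * E = F * E ∧
      γ • (F * D) + α ((N : ℤ) - 1) • (F * E) = 0 := by
  have hα : ∀ j, α j ≠ 0 := fun j => (hαpos j).ne'
  have hW : IsAssociatedPolynomials α β W := ⟨hW0, hW1, hWrec⟩
  obtain ⟨hwN₁, hwN, hw₁⟩ := hW.boundary_values_of_prodDesc_eq_smul_one hα (by omega) hProd
  have hγ₀ : γ ≠ 0 := by rcases hγ with rfl | rfl <;> norm_num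
  let first : Fin N := ⟨0, by omega⟩
  let last : Fin N := ⟨N - 1, by omega⟩
  let w : Fin N → ℝ := fun i => W 0 i 0
  let t : Fin N → ℝ := -γ⁻¹ • fun j : Fin N => W (j + 1) (N - 1 - j) 0 / α j
  have hD' : D = jacobiMatrix α β N := Matrix.ext hD
  have hE' : E = vecMulVec (Pi.single last 1) (Pi.single first 1) := by
    ext i j
    simp only [hE, vecMulVec_apply, Pi.single_apply, Fin.ext_iff, last, first,
      ite_zero_mul_ite_zero, mul_one]
  have hF' : F = vecMulVec w t := by
    ext i j
    rw [hF]
    simp only [vecMulVec_apply, w, t, Pi.smul_apply, smul_eq_mul]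
    ring
  have hαlast : α (last : ℕ) = α ((N : ℤ) - 1) := by
    simp [last, Nat.cast_sub (by omega : 1 ≤ N)]
  have hDw : D *ᵥ w = -(α ((N : ℤ) - 1) * γ) • Pi.single last 1 := by
    rw [hD', hW.jacobiMatrix_mulVec hα 0 (last := last) (Nat.sub_add_cancel (by omega)), hαlast,
      hwN, zero_smul, zero_sub, neg_smul]
  have htD : t ᵥ* D = Pi.single first 1 := by
    rw [← mulVec_transpose, hD', jacobiMatrix_transpose, mulVec_smul,
      hW.jacobiMatrix_mulVec_shift hα 0 (first := first) rfl, hwN, zero_smul, zero_sub, smul_neg,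
      smul_smul]
    simp [hγ₀]
  have hFE : F * E = vecMulVec w ((-(γ * α ((N : ℤ) - 1))⁻¹) • Pi.single first 1) := by
    rw [hF', hE', vecMulVec_mul_vecMulVec, dotProduct_single_one]
    simp [t, last, ← hαlast, Nat.sub_add_cancel (by omega : 1 ≤ N), hW0, mul_comm]
  have hDFE : D * (F * E) = E := by
    rw [hFE, mul_vecMulVec, hDw, hE', smul_vecMulVec, vecMulVec_smul, smul_smul, neg_mul_neg,
      mul_comm (α _), mul_inv_cancel₀ (mul_ne_zero hγ₀ (hα _)), one_smul]
  have hunit : IsUnit D := hD' ▸ hW.isUnit_jacobiMatrix hα (by omega) (hwN ▸ hγ₀)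
  refine ⟨hunit, ?_, ?_, ?_, ?_⟩
  · rw [hF', hE', transpose_vecMulVec, vecMulVec_mul_vecMulVec, dotProduct_single_one]
    simp [t, hw₁, first]
  · rw [hF', hE', transpose_vecMulVec, vecMulVec_mul_vecMulVec, single_one_dotProduct]
    simp [w, last, hwN₁]
  · conv_lhs => rw [← hDFE]
    exact nonsing_inv_mul_cancel_left _ _ ((isUnit_iff_isUnit_det D).1 hunit)
  · rw [hF', vecMulVec_mul, htD, ← hF', hFE, vecMulVec_smul, smul_smul, ← add_smul]
    convert zero_smul ℝ (vecMulVec w (Pi.single first 1))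
    have := hα ((N : ℤ) - 1)
    field_simp
    rcases hγ with rfl | rfl <;> norm_num

theorem stmt7 (N : ℕ) (hN : 2 ≤ N)
    (α β : ℤ → ℝ) (hαpos : ∀ j, 0 < α j)
    (hαper : ∀ j, α (j + N) = α j) (hβper : ∀ j, β (j + N) = β j)
    -- `W k n` is the orthonormal polynomial `w_n^{[k]}` associated with the shifted sequences
    (W : ℕ → ℕ → ℝ → ℝ)
    (hW0 : ∀ (k : ℕ) (x : ℝ), W k 0 x = 1)
    (hW1 : ∀ (k : ℕ) (x : ℝ), W k 1 x = (x - β k) / α k)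
    (hWrec : ∀ k : ℕ, ∀ n : ℕ, 1 ≤ n → ∀ x : ℝ,
      α ((n : ℤ) + k - 1) * W k (n - 1) x + β ((n : ℤ) + k) * W k n x
        + α ((n : ℤ) + k) * W k (n + 1) x = x * W k n x)
    (γ : ℝ) (hγ : γ = -1 ∨ γ = 1)
    (hProd : prodDesc (fun j => transferMatrix α β j 0) 0 N
      = γ • (1 : Matrix (Fin 2) (Fin 2) ℝ))
    (E F D : Matrix (Fin N) (Fin N) ℝ)
    (hE : ∀ i j : Fin N, E i j = if (i : ℕ) = N - 1 ∧ (j : ℕ) = 0 then 1 else 0)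
    (hF : ∀ i j : Fin N, F i j =
      -(W 0 i 0 * W ((j : ℕ) + 1) (N - 1 - (j : ℕ)) 0) / (γ * α (j : ℕ)))
    (hD : ∀ i j : Fin N, D i j =
      if i = j then β (i : ℕ)
      else if (i : ℕ) + 1 = (j : ℕ) then α (i : ℕ)
      else if (j : ℕ) + 1 = (i : ℕ) then α (j : ℕ)
      else 0) :
    IsUnit D ∧ F * Eᵀ = 0 ∧ Eᵀ * F = 0 ∧ D⁻¹ * E = F * E ∧
      γ • (F * D) + α ((N : ℤ) - 1) • (F * E) = 0 :=
  stmt7_general N hN α β hαpos W hW0 hW1 hWrec γ hγ hProd E F D hE hF hD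
end

section
/- Assume ∏_{i=0}^{N−1} B̂^i(0) = γ·Id with γ ∈ {−1, 1}, and let E, F, D_N(0) be the N×N matrices defined above. Suppose lim_{k→∞} k/ã_k = ∞. Then the matrix ℬ defines an unbounded quadratic form: for every C > 0 there exists a finitely supported, nonzero sequence x : ℕ → ℝ^N such that Σ_{k=0}^∞ ‖(ℬx)_k‖² > C²·Σ_{j=0}^∞ ‖x_j‖², where (ℬx)_k = Σ_{j<k} (γ^{k−j}/ã_k)·Fᵀ·x_j + (1/ã_k)·D_N(0)⁻¹·x_k + Σ_{j>k} (γ^{j−k}/ã_j)·F·x_j and ‖·‖ is the Euclidean norm on ℝ^N. -/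
open scoped Matrix

/-!
Test the form on `x_j = γ^j e₀` for `j < M`. The signs `γ^(k-j)` and `γ^j` combine to `γ^k`, so
for `k ≥ M` all `M` contributions add up coherently: `(ℬx)_k = (M γ^k / ã_k) • F₀`, where the
row `F₀` of `F` is nonzero. On the window `M ≤ k < 2M` we have `M / ã_k ≥ k / (2 ã_k)`, which is
large once `M` is, so these `M` terms alone exceed `C² M = C² ‖x‖²`.
-/

open Finset Filter

section

variable {ι : Type*} [DecidableEq ι]

def testVector (γ : ℝ) (i₀ : ι) (M j : ℕ) : ι → ℝ :=
  if j < M then γ ^ j • Pi.single i₀ 1 else 0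

lemma testVector_of_le {γ : ℝ} {i₀ : ι} {M j : ℕ} (hj : M ≤ j) : testVector γ i₀ M j = 0 :=
  if_neg hj.not_gt

lemma testVector_ne_zero {γ : ℝ} (i₀ : ι) {M : ℕ} (hM : 0 < M) : testVector γ i₀ M ≠ 0 := by
  intro h
  simpa [testVector, hM] using congrFun (congrFun h 0) i₀

variable [Fintype ι]

lemma sum_sq_testVector {γ : ℝ} (hγ : γ ^ 2 = 1) (i₀ : ι) (M j : ℕ) :
    ∑ i, testVector γ i₀ M j i ^ 2 = if j < M then 1 else 0 := by
  unfold testVector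
  split_ifs
  · simp [Pi.single_apply, ← pow_mul, pow_mul', hγ]
  · simp

lemma tsum_sum_sq_testVector {γ : ℝ} (hγ : γ ^ 2 = 1) (i₀ : ι) (M : ℕ) :
    ∑' j, ENNReal.ofReal (∑ i, testVector γ i₀ M j i ^ 2) = M := by
  simp_rw [sum_sq_testVector hγ, apply_ite ENNReal.ofReal, ENNReal.ofReal_one, ENNReal.ofReal_zero]
  rw [tsum_eq_sum (s := range M) (by simp +contextual),
    sum_congr rfl fun j hj => if_pos (mem_range.mp hj)]
  simp

/-- `(ℬx)_k` for `x` vanishing from index `M` on, so that the sum over `j > k` is finite. -/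
noncomputable def bandOperator (γ : ℝ) (a : ℕ → ℝ) (F D : Matrix ι ι ℝ) (M : ℕ)
    (x : ℕ → ι → ℝ) (k : ℕ) : ι → ℝ :=
  (∑ j ∈ range k, (γ ^ (k - j) / a k) • Fᵀ.mulVec (x j)) + (1 / a k) • D⁻¹.mulVec (x k)
    + ∑ j ∈ Ico (k + 1) M, (γ ^ (j - k) / a j) • F.mulVec (x j)

lemma bandOperator_testVector_of_le (γ : ℝ) (a : ℕ → ℝ) (F D : Matrix ι ι ℝ) (i₀ : ι)
    {M k : ℕ} (hk : M ≤ k) :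
    bandOperator γ a F D M (testVector γ i₀ M) k = (M * γ ^ k / a k) • F i₀ := by
  have hlow : ∀ j ∈ range M,
      (γ ^ (k - j) / a k) • Fᵀ.mulVec (testVector γ i₀ M j) = (γ ^ k / a k) • F i₀ := by
    intro j hj
    rw [testVector, if_pos (mem_range.mp hj), Matrix.mulVec_smul, Matrix.mulVec_single_one,
      smul_smul, div_mul_eq_mul_div, ← pow_add, Nat.sub_add_cancel (by grind)]
    rfl
  have hhigh : ∀ j ∈ Ico M k, (γ ^ (k - j) / a k) • Fᵀ.mulVec (testVector γ i₀ M j) = 0 := by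
    intro j hj
    rw [testVector_of_le (mem_Ico.mp hj).1, Matrix.mulVec_zero, smul_zero]
  rw [bandOperator, Ico_eq_empty (by omega), testVector_of_le hk, ← sum_range_add_sum_Ico _ hk,
    sum_congr rfl hlow, sum_congr rfl hhigh]
  simp only [sum_const, card_range, sum_empty, Matrix.mulVec_zero, smul_zero,
    add_zero, ← Nat.cast_smul_eq_nsmul ℝ, smul_smul]
  ring_nf

lemma sum_sq_bandOperator_testVector_of_le {γ : ℝ} (hγ : γ ^ 2 = 1) (a : ℕ → ℝ)
    (F D : Matrix ι ι ℝ) (i₀ : ι) {M k : ℕ} (hk : M ≤ k) :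
    ∑ i, bandOperator γ a F D M (testVector γ i₀ M) k i ^ 2 = (M / a k) ^ 2 * ∑ i, F i₀ i ^ 2 := by
  have hγk : (γ ^ k) ^ 2 = 1 := by rw [← pow_mul, mul_comm, pow_mul, hγ, one_pow]
  simp only [bandOperator_testVector_of_le γ a F D i₀ hk, Pi.smul_apply, smul_eq_mul, mul_pow,
    mul_sum, div_pow, hγk]
  ring_nf

theorem exists_testVector_sum_sq_bandOperator_gt {γ : ℝ} (hγ : γ ^ 2 = 1) {a : ℕ → ℝ}
    (ha : ∀ k, 0 < a k) (hlim : Tendsto (fun k : ℕ => (k : ℝ) / a k) atTop atTop)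
    (F D : Matrix ι ι ℝ) {i₀ : ι} (hF : F i₀ ≠ 0) (C : ℝ) :
    ∃ M : ℕ, 0 < M ∧ ENNReal.ofReal (C ^ 2) * M
      < ∑' k, ENNReal.ofReal (∑ i, bandOperator γ a F D M (testVector γ i₀ M) k i ^ 2) := by
  set S := ∑ i, F i₀ i ^ 2
  have hS : 0 < S := by
    obtain ⟨i, hi⟩ := Function.ne_iff.mp hF
    exact sum_pos' (fun _ _ => sq_nonneg _) ⟨i, mem_univ i, pow_two_pos_of_ne_zero hi⟩
  obtain ⟨K, hK⟩ := eventually_atTop.mp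
    ((((tendsto_pow_atTop two_ne_zero).comp hlim).atTop_mul_const (by positivity : 0 < S / 4)
      ).eventually_gt_atTop (C ^ 2))
  refine ⟨K + 1, K.succ_pos, ?_⟩
  set M := K + 1
  have hwindow : ∀ k ∈ Ico M (2 * M),
      ENNReal.ofReal (C ^ 2)
        < ENNReal.ofReal (∑ i, bandOperator γ a F D M (testVector γ i₀ M) k i ^ 2) := by
    intro k hk
    obtain ⟨hMk, hk2M⟩ := mem_Ico.mp hk
    rw [ENNReal.ofReal_lt_ofReal_iff_of_nonneg (sq_nonneg C),
      sum_sq_bandOperator_testVector_of_le hγ a F D i₀ hMk]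
    have hkM : (k : ℝ) / 2 ≤ M := by
      rw [div_le_iff₀ two_pos]; exact_mod_cast (by omega : k ≤ M * 2)
    calc C ^ 2 < (k / a k) ^ 2 * (S / 4) := hK k (by omega)
      _ = (k / 2 / a k) ^ 2 * S := by ring
      _ ≤ (M / a k) ^ 2 * S := by have := ha k; gcongr
  calc ENNReal.ofReal (C ^ 2) * M = ∑ _k ∈ Ico M (2 * M), ENNReal.ofReal (C ^ 2) := by
        rw [sum_const, Nat.card_Ico, show 2 * M - M = M by omega, nsmul_eq_mul, mul_comm]
    _ < ∑ k ∈ Ico M (2 * M),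
        ENNReal.ofReal (∑ i, bandOperator γ a F D M (testVector γ i₀ M) k i ^ 2) :=
      ENNReal.sum_lt_sum_of_nonempty (nonempty_Ico.mpr (by omega)) hwindow
    _ ≤ _ := ENNReal.sum_le_tsum _

end

theorem stmt10 (N : ℕ) (hN : 2 ≤ N)
    (α : ℤ → ℝ) (hαpos : ∀ j, 0 < α j)
    -- `W k n` is the orthonormal polynomial `w_n^{[k]}` associated with the shifted sequences
    (W : ℕ → ℕ → ℝ → ℝ)
    (hW0 : ∀ (k : ℕ) (x : ℝ), W k 0 x = 1)
    (γ : ℝ) (hγ : γ = -1 ∨ γ = 1)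
    (F D : Matrix (Fin N) (Fin N) ℝ)
    (hF : ∀ i j : Fin N, F i j =
      -(W 0 i 0 * W ((j : ℕ) + 1) (N - 1 - (j : ℕ)) 0) / (γ * α (j : ℕ)))
    (atil : ℕ → ℝ) (hatil : ∀ k, 0 < atil k)
    (atil : ℕ → ℝ) (hatil : ∀ k, 0 < atil k)
    (hlim : Filter.Tendsto (fun k : ℕ => (k : ℝ) / atil k) Filter.atTop Filter.atTop) :
    ∀ C : ℝ, 0 < C → ∃ (M : ℕ) (x : ℕ → Fin N → ℝ),
      (∀ j, M ≤ j → x j = 0) ∧ x ≠ 0 ∧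
      ENNReal.ofReal (C ^ 2) * (∑' j : ℕ, ENNReal.ofReal (∑ i : Fin N, (x j i) ^ 2))
      < ∑' k : ℕ, ENNReal.ofReal (∑ i : Fin N,
        (((∑ j ∈ Finset.range k, (γ ^ (k - j) / atil k) • Fᵀ.mulVec (x j))
          + (1 / atil k) • D⁻¹.mulVec (x k)
          + ∑ j ∈ Finset.Ico (k + 1) M, (γ ^ (j - k) / atil j) • F.mulVec (x j)) i) ^ 2) := by
  intro C _
  have hγsq : γ ^ 2 = 1 := by rcases hγ with rfl | rfl <;> norm_num
  -- The entry `F 0 (N-1)` is `-1 / (γ α_{N-1})`, as both polynomial factors are `w_0 = 1`.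
  have hrow : F ⟨0, by omega⟩ ≠ 0 := by
    intro h
    have hentry := congrFun h ⟨N - 1, by omega⟩
    rw [hF, Nat.sub_self, hW0, hW0] at hentry
    have := hαpos ((N - 1 : ℕ) : ℤ)
    rcases hγ with rfl | rfl <;> simp at hentry <;> linarith
  obtain ⟨M, hM, hgt⟩ := exists_testVector_sum_sq_bandOperator_gt hγsq hatil hlim F D hrow C
  refine ⟨M, testVector γ ⟨0, by omega⟩ M, fun _ => testVector_of_le,
    testVector_ne_zero _ hM, ?_⟩
  rwa [tsum_sum_sq_testVector hγsq]
end

section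
/- Assume a_n → ∞ and that there exist N-periodic sequences s and z with lim_{n→∞} (r_n·a_n − a_{n−1} − s_n) = 0 and lim_{n→∞} (q_n·a_n − b_n − z_n) = 0. Then lim_{n→∞} (a_{n−1}/a_n − r_n) = 0 and lim_{n→∞} (b_n/a_n − q_n) = 0. Moreover, for every integer j ≥ 1 there is a constant c > 0 such that for all m ≥ 1 one has 𝒱_N(1/a_n : n ≥ m) + 𝒱_N(a_{n+j}/a_n : n ≥ m) + 𝒱_N(b_n/a_n : n ≥ m) ≤ c·f_m, where f_m = 𝒱_N(1/a_n : n ≥ m) + 𝒱_N(r_n·a_n − a_{n−1} : n ≥ m) + 𝒱_N(b_n − q_n·a_n : n ≥ m), the inequality being understood in [0, ∞]. -/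
/-!
Put `e_n = r_n a_n - a_{n-1}` and `w_n = b_n - q_n a_n`; both are bounded, being periodic up to a
null sequence. Then `a_{n-1}/a_n = r_n - e_n/a_n` and `b_n/a_n = q_n + w_n/a_n`, which gives the
two limits.

For the variations, call `x` controlled if `𝒱_N(x_n : n ≥ m) ≤ C f_m` for all `m`. Periodic
sequences are controlled, and controlled sequences are closed under sums, products of bounded
members, inverses bounded away from `0`, and shifts (as `f_m` decreases in `m`). Since `1/a`, `e`
and `w` are controlled, so are `b/a`, `a_{n-1}/a_n`, its shifted inverse `a_{n+1}/a_n`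
(bounded because `a_{n-1}/a_n` is eventually close to `r_n ≥ min r > 0`), and the telescoping
product `a_{n+j}/a_n = ∏_{i<j} a_{n+i+1}/a_{n+i}`.
-/

open Filter

/-- The total `N`-variation `𝒱_N(x_n : n ≥ m) = Σ_{n=m}^∞ |x_{n+N} − x_n|`, valued in `[0, ∞]`. -/
noncomputable def totalVar (N : ℕ) (x : ℕ → ℝ) (m : ℕ) : ENNReal :=
  ∑' n : ℕ, ENNReal.ofReal |x (m + n + N) - x (m + n)|

open Finset Topology
open scoped NNReal ENNReal

theorem Function.Periodic.exists_abs_le {s : ℕ → ℝ} {N : ℕ} (hs : Function.Periodic s N)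
    (hN : 0 < N) : ∃ B : ℝ≥0, ∀ n, |s n| ≤ B := by
  obtain ⟨i, -, hi⟩ := (range N).exists_max_image (fun i => ‖s i‖₊) ⟨0, mem_range.2 hN⟩
  refine ⟨‖s i‖₊, fun n => ?_⟩
  rw [coe_nnnorm, Real.norm_eq_abs, ← hs.map_mod_nat n]
  exact_mod_cast hi _ (mem_range.2 (Nat.mod_lt n hN))

theorem Function.Periodic.exists_pos_le {s : ℕ → ℝ} {N : ℕ} (hs : Function.Periodic s N)
    (hN : 0 < N) (hpos : ∀ n, 0 < s n) : ∃ ρ, 0 < ρ ∧ ∀ n, ρ ≤ s n := by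
  obtain ⟨i, -, hi⟩ := (range N).exists_min_image s ⟨0, mem_range.2 hN⟩
  exact ⟨s i, hpos i, fun n => hs.map_mod_nat n ▸ hi _ (mem_range.2 (Nat.mod_lt n hN))⟩

theorem exists_abs_le_of_eventually {x : ℕ → ℝ} {C : ℝ} (h : ∀ᶠ n in atTop, |x n| ≤ C) :
    ∃ B : ℝ≥0, ∀ n, |x n| ≤ B := by
  obtain ⟨B, hB⟩ := IsBoundedUnder.bddAbove_range (f := fun n => |x n|) ⟨C, h⟩
  exact ⟨B.toNNReal, fun n => (hB (Set.mem_range_self n)).trans (Real.le_coe_toNNReal B)⟩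

theorem exists_abs_le_of_tendsto_sub {x p : ℕ → ℝ} {P : ℝ≥0} (hp : ∀ n, |p n| ≤ P)
    (h : Tendsto (fun n => x n - p n) atTop (𝓝 0)) : ∃ B : ℝ≥0, ∀ n, |x n| ≤ B := by
  refine exists_abs_le_of_eventually (C := 1 + P) ?_
  filter_upwards [(Metric.tendsto_nhds.mp h) 1 one_pos] with n hn
  rw [Real.dist_eq, sub_zero] at hn
  calc |x n| = |(x n - p n) + p n| := by rw [sub_add_cancel]
    _ ≤ 1 + P := (abs_add_le _ _).trans (add_le_add hn.le (hp n))

theorem exists_abs_inv_le_of_tendsto_sub {x p : ℕ → ℝ} {ρ : ℝ} (hρ : 0 < ρ) (hp : ∀ n, ρ ≤ p n)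
    (h : Tendsto (fun n => x n - p n) atTop (𝓝 0)) : ∃ B : ℝ≥0, ∀ n, |(x n)⁻¹| ≤ B := by
  refine exists_abs_le_of_eventually (C := (ρ / 2)⁻¹) ?_
  filter_upwards [(Metric.tendsto_nhds.mp h) (ρ / 2) (half_pos hρ)] with n hn
  rw [Real.dist_eq, sub_zero] at hn
  have hx : ρ / 2 ≤ x n := by linarith [(abs_lt.mp hn).1, hp n]
  rw [abs_of_pos (inv_pos.mpr ((half_pos hρ).trans_le hx))]
  exact inv_anti₀ (half_pos hρ) hx

theorem tendsto_div_sub_of_abs_sub_mul_le {x p a : ℕ → ℝ} {B : ℝ} (ha : Tendsto a atTop atTop)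
    (h : ∀ n, |x n - p n * a n| ≤ B) : Tendsto (fun n => x n / a n - p n) atTop (𝓝 0) := by
  refine (isBoundedUnder_le_mul_tendsto_zero (isBoundedUnder_of ⟨B, h⟩)
    ha.inv_tendsto_atTop).congr' ?_
  filter_upwards [ha.eventually_gt_atTop 0] with n hn
  rw [Pi.inv_apply]
  field_simp

section TotalVar

variable {N : ℕ}

theorem totalVar_comp_add (x : ℕ → ℝ) (m k : ℕ) :
    totalVar N (fun n => x (n + k)) m = totalVar N x (m + k) := by
  refine tsum_congr fun n => ?_
  change ENNReal.ofReal |x (m + n + N + k) - x (m + n + k)| = _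
  rw [show m + n + N + k = m + k + n + N by omega, show m + n + k = m + k + n by omega]

theorem totalVar_antitone (x : ℕ → ℝ) : Antitone (totalVar N x) := by
  intro m m' hm
  obtain ⟨k, rfl⟩ := Nat.exists_eq_add_of_le hm
  calc totalVar N x (m + k)
      = ∑' n, (fun i => ENNReal.ofReal |x (m + i + N) - x (m + i)|) (k + n) := by
        simp only [totalVar, add_assoc]
    _ ≤ totalVar N x m := ENNReal.tsum_comp_le_tsum_of_injective (add_right_injective k) _

theorem totalVar_eq_zero_of_periodic {p : ℕ → ℝ} (hp : Function.Periodic p N) (m : ℕ) :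
    totalVar N p m = 0 := by
  simp [totalVar, hp _]

theorem totalVar_le_of_abs_sub_le {x y z : ℕ → ℝ} {C D : ℝ≥0}
    (h : ∀ n, |x (n + N) - x n| ≤ C * |y (n + N) - y n| + D * |z (n + N) - z n|) (m : ℕ) :
    totalVar N x m ≤ C * totalVar N y m + D * totalVar N z m := by
  simp only [totalVar, ← ENNReal.tsum_mul_left, ← ENNReal.tsum_add]
  refine ENNReal.tsum_le_tsum fun n => (ENNReal.ofReal_le_ofReal (h (m + n))).trans_eq ?_
  rw [ENNReal.ofReal_add (by positivity) (by positivity), ENNReal.ofReal_mul C.coe_nonneg,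
    ENNReal.ofReal_mul D.coe_nonneg, ENNReal.ofReal_coe_nnreal, ENNReal.ofReal_coe_nnreal]

end TotalVar

theorem prod_range_div_eq {a : ℕ → ℝ} (ha : ∀ n, a n ≠ 0) (n j : ℕ) :
    ∏ i ∈ range j, a (n + i + 1) / a (n + i) = a (n + j) / a n := by
  induction j with
  | zero => simp [ha n]
  | succ j ih =>
    rw [prod_range_succ, ih, ← add_assoc]
    field_simp [ha]

def VarControlled (N : ℕ) (f : ℕ → ℝ≥0∞) (x : ℕ → ℝ) : Prop :=
  ∃ C : ℝ≥0, ∀ m, totalVar N x m ≤ C * f m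

namespace VarControlled

variable {N : ℕ} {f : ℕ → ℝ≥0∞} {x y z : ℕ → ℝ}

theorem of_le (h : ∀ m, totalVar N x m ≤ f m) : VarControlled N f x :=
  ⟨1, by simpa using h⟩

theorem of_periodic (hx : Function.Periodic x N) : VarControlled N f x :=
  ⟨0, fun m => by simp [totalVar_eq_zero_of_periodic hx]⟩

theorem congr (hx : VarControlled N f x) (h : ∀ n, x n = y n) : VarControlled N f y :=
  funext h ▸ hx

theorem of_abs_sub_le (hy : VarControlled N f y) (hz : VarControlled N f z) (C D : ℝ≥0)
    (h : ∀ n, |x (n + N) - x n| ≤ C * |y (n + N) - y n| + D * |z (n + N) - z n|) :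
    VarControlled N f x := by
  obtain ⟨Cy, hCy⟩ := hy
  obtain ⟨Cz, hCz⟩ := hz
  refine ⟨C * Cy + D * Cz, fun m => (totalVar_le_of_abs_sub_le h m).trans ?_⟩
  calc C * totalVar N y m + D * totalVar N z m ≤ C * (Cy * f m) + D * (Cz * f m) := by
        gcongr
        exacts [hCy m, hCz m]
    _ = ↑(C * Cy + D * Cz) * f m := by push_cast; ring

theorem add (hx : VarControlled N f x) (hy : VarControlled N f y) :
    VarControlled N f (fun n => x n + y n) :=
  of_abs_sub_le hx hy 1 1 fun n => by
    simpa only [NNReal.coe_one, one_mul, add_sub_add_comm] using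
      abs_add_le (x (n + N) - x n) (y (n + N) - y n)

theorem sub (hx : VarControlled N f x) (hy : VarControlled N f y) :
    VarControlled N f (fun n => x n - y n) :=
  of_abs_sub_le hx hy 1 1 fun n => by
    simpa only [NNReal.coe_one, one_mul, sub_sub_sub_comm] using
      abs_sub (x (n + N) - x n) (y (n + N) - y n)

theorem mul (hx : VarControlled N f x) (hy : VarControlled N f y) {Bx By : ℝ≥0}
    (hBx : ∀ n, |x n| ≤ Bx) (hBy : ∀ n, |y n| ≤ By) :
    VarControlled N f (fun n => x n * y n) :=
  of_abs_sub_le hy hx Bx By fun n => calc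
    |x (n + N) * y (n + N) - x n * y n|
        = |x (n + N) * (y (n + N) - y n) + y n * (x (n + N) - x n)| := by ring_nf
    _ ≤ |x (n + N)| * |y (n + N) - y n| + |y n| * |x (n + N) - x n| := by
        rw [← abs_mul, ← abs_mul]
        exact abs_add_le _ _
    _ ≤ Bx * |y (n + N) - y n| + By * |x (n + N) - x n| := by
        gcongr
        exacts [hBx _, hBy n]

theorem inv (hx : VarControlled N f x) (hx0 : ∀ n, x n ≠ 0) {B : ℝ≥0}
    (hB : ∀ n, |(x n)⁻¹| ≤ B) : VarControlled N f (fun n => (x n)⁻¹) :=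
  of_abs_sub_le hx hx (B * B) 0 fun n => calc
    |(x (n + N))⁻¹ - (x n)⁻¹| = |(x (n + N))⁻¹| * |(x n)⁻¹| * |x (n + N) - x n| := by
        rw [inv_sub_inv (hx0 _) (hx0 n), abs_div, abs_mul, abs_sub_comm, abs_inv, abs_inv]
        ring
    _ ≤ B * B * |x (n + N) - x n| := by gcongr; exacts [hB _, hB n]
    _ = ↑(B * B) * |x (n + N) - x n| + ↑(0 : ℝ≥0) * |x (n + N) - x n| := by simp

theorem comp_add (hf : Antitone f) (hx : VarControlled N f x) (k : ℕ) :
    VarControlled N f (fun n => x (n + k)) := by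
  obtain ⟨C, hC⟩ := hx
  exact ⟨C, fun m => totalVar_comp_add x m k ▸
    (hC _).trans (by gcongr; exact hf (m.le_add_right k))⟩

theorem prod_range (hf : Antitone f) (hx : VarControlled N f x) {B : ℝ≥0}
    (hB : ∀ n, |x n| ≤ B) (j : ℕ) : VarControlled N f (fun n => ∏ i ∈ range j, x (n + i)) := by
  induction j with
  | zero => exact of_periodic fun n => by simp
  | succ j ih =>
    simp only [prod_range_succ]
    refine ih.mul (hx.comp_add hf j) (Bx := B ^ j) (fun n => ?_) (fun n => hB _)
    rw [abs_prod]
    exact (prod_le_prod (fun i _ => abs_nonneg _) (fun i _ => hB _)).trans_eq (by simp)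

theorem exists_add_add_le (hx : VarControlled N f x) (hy : VarControlled N f y)
    (hz : VarControlled N f z) : ∃ c : ℝ, 0 < c ∧
      ∀ m, totalVar N x m + totalVar N y m + totalVar N z m ≤ ENNReal.ofReal c * f m := by
  obtain ⟨Cx, hCx⟩ := hx
  obtain ⟨Cy, hCy⟩ := hy
  obtain ⟨Cz, hCz⟩ := hz
  refine ⟨Cx + Cy + Cz + 1, by positivity, fun m => ?_⟩
  calc _ ≤ Cx * f m + Cy * f m + Cz * f m := add_le_add (add_le_add (hCx m) (hCy m)) (hCz m)
    _ = ENNReal.ofReal ↑(Cx + Cy + Cz) * f m := by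
      rw [ENNReal.ofReal_coe_nnreal]
      push_cast
      ring
    _ ≤ ENNReal.ofReal (Cx + Cy + Cz + 1) * f m := by
      gcongr
      push_cast
      linarith

theorem shift_div_self {a r : ℕ → ℝ} {A U G : ℝ≥0} (hf : Antitone f) (ha0 : ∀ n, a n ≠ 0)
    (hr : Function.Periodic r N) (hinv : VarControlled N f fun n => 1 / a n)
    (hA : ∀ n, |1 / a n| ≤ A) (he : VarControlled N f fun n => r n * a n - a (n - 1))
    (hU : ∀ n, |r n * a n - a (n - 1)| ≤ U) (hG : ∀ n, |(a (n - 1) / a n)⁻¹| ≤ G) (j : ℕ) :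
    VarControlled N f fun n => a (n + j) / a n := by
  have c_g : VarControlled N f fun n => a (n - 1) / a n :=
    ((of_periodic hr).sub (he.mul hinv hU hA)).congr fun n => by
      field_simp [ha0 n]
      ring
  have c_h : VarControlled N f fun n => a (n + 1) / a n :=
    ((c_g.inv (fun n => div_ne_zero (ha0 _) (ha0 n)) hG).comp_add hf 1).congr fun n => by simp
  exact (c_h.prod_range hf (fun n => by simpa using hG (n + 1)) j).congr fun n =>
    prod_range_div_eq ha0 n j

end VarControlled

theorem stmt12 (N : ℕ) (hN : 1 ≤ N)
    (r q : ℕ → ℝ) (hrpos : ∀ n, 0 < r n)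
    (hrper : ∀ n, r (n + N) = r n) (hqper : ∀ n, q (n + N) = q n)
    (a b : ℕ → ℝ) (hapos : ∀ n, 0 < a n)
    (s z : ℕ → ℝ) (hsper : ∀ n, s (n + N) = s n) (hzper : ∀ n, z (n + N) = z n)
    (halim : Tendsto a atTop atTop)
    (hs : Tendsto (fun n => r n * a n - a (n - 1) - s n) atTop (nhds 0))
    (hz : Tendsto (fun n => q n * a n - b n - z n) atTop (nhds 0)) :
    (Tendsto (fun n => a (n - 1) / a n - r n) atTop (nhds 0) ∧
      Tendsto (fun n => b n / a n - q n) atTop (nhds 0)) ∧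
    ∀ j : ℕ, 1 ≤ j → ∃ c : ℝ, 0 < c ∧ ∀ m : ℕ, 1 ≤ m →
      totalVar N (fun n => 1 / a n) m + totalVar N (fun n => a (n + j) / a n) m
          + totalVar N (fun n => b n / a n) m
        ≤ ENNReal.ofReal c *
          (totalVar N (fun n => 1 / a n) m + totalVar N (fun n => r n * a n - a (n - 1)) m
            + totalVar N (fun n => b n - q n * a n) m) := by
  have ha0 : ∀ n, a n ≠ 0 := fun n => (hapos n).ne'
  have hinv : Tendsto (fun n => 1 / a n) atTop (𝓝 0) :=
    halim.inv_tendsto_atTop.congr fun n => (one_div (a n)).symm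
  obtain ⟨A, hA⟩ : ∃ A : ℝ≥0, ∀ n, |1 / a n| ≤ A :=
    exists_abs_le_of_tendsto_sub (p := 0) (P := 0) (fun _ => by simp) (by simpa using hinv)
  obtain ⟨S, hS⟩ := Function.Periodic.exists_abs_le hsper hN
  obtain ⟨Z, hZ⟩ := Function.Periodic.exists_abs_le hzper hN
  obtain ⟨U, hU⟩ := exists_abs_le_of_tendsto_sub hS hs
  obtain ⟨W, hW⟩ := exists_abs_le_of_tendsto_sub hZ hz
  replace hW : ∀ n, |b n - q n * a n| ≤ W := fun n => abs_sub_comm (b n) _ ▸ hW n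
  have hlim_g : Tendsto (fun n => a (n - 1) / a n - r n) atTop (𝓝 0) :=
    tendsto_div_sub_of_abs_sub_mul_le halim fun n => abs_sub_comm (a (n - 1)) _ ▸ hU n
  refine ⟨⟨hlim_g, tendsto_div_sub_of_abs_sub_mul_le halim hW⟩, fun j _ => ?_⟩
  set f : ℕ → ℝ≥0∞ := fun m => totalVar N (fun n => 1 / a n) m
    + totalVar N (fun n => r n * a n - a (n - 1)) m + totalVar N (fun n => b n - q n * a n) m
  have hf : Antitone f :=
    ((totalVar_antitone _).add (totalVar_antitone _)).add (totalVar_antitone _)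
  have c_inv : VarControlled N f (fun n => 1 / a n) :=
    .of_le fun m => le_self_add.trans le_self_add
  have c_e : VarControlled N f (fun n => r n * a n - a (n - 1)) :=
    .of_le fun m => le_add_self.trans le_self_add
  have c_w : VarControlled N f (fun n => b n - q n * a n) := .of_le fun m => le_add_self
  have c_b : VarControlled N f (fun n => b n / a n) :=
    ((VarControlled.of_periodic hqper).add (c_w.mul c_inv hW hA)).congr fun n => by
      field_simp [ha0 n]
      ring
  obtain ⟨ρ, hρ, hρr⟩ := Function.Periodic.exists_pos_le hrper hN hrpos
  obtain ⟨G, hG⟩ := exists_abs_inv_le_of_tendsto_sub hρ hρr hlim_g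
  obtain ⟨c, hc, hle⟩ :=
    c_inv.exists_add_add_le (c_inv.shift_div_self hf ha0 hrper hA c_e hU hG j) c_b
  exact ⟨c, hc, fun m _ => hle m⟩
end
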